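/- arXiv:1005.3759 — 2 statements merged into one kernel-verified Lean document; each statement's English description precedes it below -/
import Mathlib

section
/- Let G be a connected signed, colored graph of type (n+1,n+1) satisfying dual equivalence axioms 1 through 5 such that every connected component of the (n,n)-restriction of G is isomorphic to a standard dual equivalence graph, and let φ be a morphism from G to the standard dual equivalence graph G_λ, with λ a partition of n+1. Then the fibers φ^{−1}(T), over the vertices T of G_λ, all have the same cardinality. -/
open scoped Classical

noncomputable section

/-! ### Signed, colored graphs -/

/-- A signed, colored graph of type `(n, N)`: a vertex set `V`, a signature
function `σ : V → {±1}^(N-1)` (encoded as a function `ℕ → ℤ` whose values are `±1`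
for `1 ≤ i ≤ N-1`), and for each `1 < i < n` a set of edges `E_i` (encoded as a
symmetric irreflexive relation). -/
structure SCG (V : Type) (n N : ℕ) where
  sgn : V → ℕ → ℤ
  edge : ℕ → V → V → Prop
  sgn_pm : ∀ v i, 1 ≤ i → i < N → sgn v i = 1 ∨ sgn v i = -1
  edge_symm : ∀ i v w, edge i v w → edge i w v
  edge_ne : ∀ i v w, edge i v w → v ≠ w
  edge_supp : ∀ i v w, edge i v w → 1 < i ∧ i < n

namespace SCG

variable {V W : Type} {n N n' N' : ℕ}

/-- Reachability using edges whose colors lie in `S`. -/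
def ReachS (G : SCG V n N) (S : Set ℕ) (v w : V) : Prop :=
  Relation.ReflTransGen (fun a b => ∃ i ∈ S, G.edge i a b) v w

/-- Reachability using all edges. -/
def Reach (G : SCG V n N) (v w : V) : Prop :=
  Relation.ReflTransGen (fun a b => ∃ i, G.edge i a b) v w

/-- The connected component of `v0`, as a signed colored graph. -/
def component (G : SCG V n N) (v0 : V) : SCG {v : V // G.Reach v0 v} n N where
  sgn v := G.sgn v.1
  edge i v w := G.edge i v.1 w.1
  sgn_pm v := G.sgn_pm v.1
  edge_symm i v w h := G.edge_symm i v.1 w.1 h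
  edge_ne i v w h hvw := G.edge_ne i v.1 w.1 h (congrArg Subtype.val hvw)
  edge_supp i v w h := G.edge_supp i v.1 w.1 h

/-- The `(m, M)`-restriction of a signed colored graph: keep the vertex set,
truncate the signature (i.e. only promise values on `1 ≤ i ≤ M-1`), and
keep only the edges `E_2, …, E_(m-1)`. -/
def restrict (G : SCG V n N) (m M : ℕ) (hm : m ≤ n) (hM : M ≤ N) : SCG V m M where
  sgn := G.sgn
  edge i v w := i < m ∧ G.edge i v w
  sgn_pm v i h1 h2 := G.sgn_pm v i h1 (lt_of_lt_of_le h2 hM)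
  edge_symm i v w h := ⟨h.1, G.edge_symm i v w h.2⟩
  edge_ne i v w h := G.edge_ne i v w h.2
  edge_supp i v w h := ⟨(G.edge_supp i v w h.2).1, h.1⟩

/-- A morphism of signed colored graphs of the same type: preserves all
signature coordinates and all colored edges. -/
def IsMorphism (G : SCG V n N) (H : SCG W n N) (φ : V → W) : Prop :=
  (∀ v i, 1 ≤ i → i < N → H.sgn (φ v) i = G.sgn v i) ∧
  ∀ i v w, G.edge i v w → H.edge i (φ v) (φ w)

/-- Isomorphism of signed colored graphs: a bijective morphism. -/
def Isomorphic (G : SCG V n N) (H : SCG W n N) : Prop :=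
  ∃ φ : V → W, IsMorphism G H φ ∧ Function.Bijective φ

/-- An isomorphism of edge-colored graphs between the connected component of `v0`
in `G` using the colors in `S`, and the connected component of `u0` in `H` using
the colors `r '' S`, matching each color `i ∈ S` with the color `r i`. -/
def ColorIso (G : SCG V n N) (v0 : V) (H : SCG W n' N') (u0 : W)
    (r : ℕ → ℕ) (S : Set ℕ) : Prop :=
  ∃ f : {v : V // G.ReachS S v0 v} → {u : W // H.ReachS (r '' S) u0 u},
    Function.Bijective f ∧ ∀ i ∈ S, ∀ a b, G.edge i a.1 b.1 ↔ H.edge (r i) (f a).1 (f b).1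

/-- Dual equivalence axiom 1. -/
def Ax1 (G : SCG V n N) : Prop :=
  ∀ i, 1 < i → i < n → ∀ w, (G.sgn w (i - 1) = -G.sgn w i ↔ ∃! x, G.edge i w x)

/-- Dual equivalence axiom 2. -/
def Ax2 (G : SCG V n N) : Prop :=
  ∀ i v w, G.edge i v w →
    G.sgn v (i - 1) = -G.sgn w (i - 1) ∧ G.sgn v i = -G.sgn w i ∧
      ∀ h, h + 2 < i ∨ i + 1 < h → G.sgn v h = G.sgn w h

/-- Dual equivalence axiom 3. -/
def Ax3 (G : SCG V n N) : Prop :=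
  ∀ i v w, G.edge i v w →
    (G.sgn v (i - 2) = -G.sgn w (i - 2) → G.sgn v (i - 2) = -G.sgn v (i - 1)) ∧
    (G.sgn v (i + 1) = -G.sgn w (i + 1) → G.sgn v (i + 1) = -G.sgn v i)

/-- Dual equivalence axiom 5. -/
def Ax5 (G : SCG V n N) : Prop :=
  ∀ i j w x y, G.edge i w x → G.edge j x y → i + 3 ≤ j ∨ j + 3 ≤ i →
    ∃ v, G.edge j w v ∧ G.edge i v y

/-- Dual equivalence axiom 6 : any two vertices of a connected component of
`E_2 ∪ ⋯ ∪ E_i` may be joined by a path crossing at most one `E_i` edge. -/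
def Ax6 (G : SCG V n N) : Prop :=
  ∀ i, 1 < i → i < n → ∀ v w : V, G.ReachS (Set.Icc 2 i) v w →
    ∃ u u', G.ReachS (Set.Icc 2 (i - 1)) v u ∧ (u = u' ∨ G.edge i u u') ∧
      G.ReachS (Set.Icc 2 (i - 1)) u' w

end SCG

/-! ### Standard Young tableaux and the standard dual equivalence graph -/

/-- A standard Young tableau of shape `μ`, recorded by the function sending
`k : Fin μ.card` to the cell containing the entry `k+1`.  (Cells are in matrix
coordinates `(row, column)`; entries increase along rows and along columns.) -/
structure SYT (μ : YoungDiagram) where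
  cellOf : Fin μ.card → ℕ × ℕ
  mem_cells : ∀ k, cellOf k ∈ μ.cells
  inj : Function.Injective cellOf
  row_mono : ∀ k l, (cellOf k).1 = (cellOf l).1 → (cellOf k).2 < (cellOf l).2 → k < l
  col_mono : ∀ k l, (cellOf k).2 = (cellOf l).2 → (cellOf k).1 < (cellOf l).1 → k < l

instance (μ : YoungDiagram) : Finite (SYT μ) := by
  apply Finite.of_injective
    (fun T : SYT μ => fun k => (⟨T.cellOf k, T.mem_cells k⟩ : {x : ℕ × ℕ // x ∈ μ.cells}))
  intro T U h
  cases T; cases U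
  simp only [SYT.mk.injEq]
  funext k
  exact congrArg Subtype.val (congrFun h k)

/-- The content of a cell: `column - row`. -/
def cellContent (x : ℕ × ℕ) : ℤ := (x.2 : ℤ) - (x.1 : ℤ)

/-- `x` comes before `y` in the content reading order: smaller content first,
and within a diagonal, southwest to northeast. -/
def readBefore (x y : ℕ × ℕ) : Prop :=
  cellContent x < cellContent y ∨ (cellContent x = cellContent y ∧ x.2 < y.2)

/-- The cell containing the entry `a` (for `1 ≤ a ≤ μ.card`). -/
def SYT.cell {μ : YoungDiagram} (T : SYT μ) (a : ℕ) : ℕ × ℕ :=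
  if h : 1 ≤ a ∧ a ≤ μ.card then T.cellOf ⟨a - 1, by omega⟩ else (0, 0)

/-- The descent signature of a standard tableau: `σ(T)_i = +1` iff `i` appears
before `i+1` in the content reading word. -/
def sytSgn {μ : YoungDiagram} (T : SYT μ) : ℕ → ℤ := fun i =>
  if readBefore (T.cell i) (T.cell (i + 1)) then 1 else -1

/-- The entry `b` lies between the entries `a` and `c` in the content reading
word of `T`. -/
def posBetween {μ : YoungDiagram} (T : SYT μ) (a b c : ℕ) : Prop :=
  (readBefore (T.cell a) (T.cell b) ∧ readBefore (T.cell b) (T.cell c)) ∨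
  (readBefore (T.cell c) (T.cell b) ∧ readBefore (T.cell b) (T.cell a))

/-- `U` is obtained from `T` by exchanging the cells of the entries `a`, `b`. -/
def swapEq {μ : YoungDiagram} (T U : SYT μ) (a b : ℕ) : Prop :=
  ∀ x, 1 ≤ x → x ≤ μ.card →
    U.cell x = if x = a then T.cell b else if x = b then T.cell a else T.cell x

/-- The elementary dual equivalence for `i-1, i, i+1`: the middle letter (in
reading order) of `i-1, i, i+1` is not `i`, and the outer two letters are
exchanged. -/
def stdEdgeCore (μ : YoungDiagram) (i : ℕ) (T U : SYT μ) : Prop :=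
  1 < i ∧ i < μ.card ∧
    ((posBetween T i (i + 1) (i - 1) ∧ swapEq T U (i - 1) i) ∨
     (posBetween T i (i - 1) (i + 1) ∧ swapEq T U i (i + 1)))

/-- The standard dual equivalence graph `G_μ` for a partition `μ` of `n`. -/
def stdDEG (n : ℕ) (μ : YoungDiagram) (hcard : μ.card = n) : SCG (SYT μ) n n where
  sgn T := sytSgn T
  edge i T U := T ≠ U ∧ (stdEdgeCore μ i T U ∨ stdEdgeCore μ i U T)
  sgn_pm := by
    intro v i _ _
    simp only [sytSgn]
    split
    · exact Or.inl rfl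
    · exact Or.inr rfl
  edge_symm := by
    rintro i T U ⟨h1, h2⟩
    exact ⟨h1.symm, h2.symm⟩
  edge_ne := fun i T U h => h.1
  edge_supp := by
    rintro i T U ⟨h1, h2 | h2⟩ <;> exact ⟨h2.1, hcard ▸ h2.2.1⟩

namespace SCG

variable {V W : Type} {n N : ℕ}

/-- Dual equivalence axiom 4 : every connected component of `E_(i-1) ∪ E_i` is
isomorphic, as an edge-colored graph, to a connected component of the
restriction to colors `{2,3}` (relabelled `i-1, i`) of a standard dual
equivalence graph `G_μ` with `μ ⊢ 4`; and similarly for three colors and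
partitions of `5`. -/
def Ax4 (G : SCG V n N) : Prop :=
  (∀ i, 2 < i → i < n → ∀ v0 : V, ∃ (μ : YoungDiagram) (h4 : μ.card = 4) (T0 : SYT μ),
      G.ColorIso v0 (stdDEG 4 μ h4) T0 (· + 3 - i) {i - 1, i}) ∧
  (∀ i, 3 < i → i < n → ∀ v0 : V, ∃ (μ : YoungDiagram) (h5 : μ.card = 5) (T0 : SYT μ),
      G.ColorIso v0 (stdDEG 5 μ h5) T0 (· + 4 - i) {i - 2, i - 1, i})

/-- A dual equivalence graph of type `(n,N)`. -/
def IsDEG (G : SCG V n N) : Prop :=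
  n ≤ N ∧ G.Ax1 ∧ G.Ax2 ∧ G.Ax3 ∧ G.Ax4 ∧ G.Ax5 ∧ G.Ax6

end SCG

/-! ### Quasisymmetric functions and Schur functions -/

/-- Gessel's fundamental quasisymmetric function `Q_σ` of degree `n`, for a
signature `s` (with `s j` the sign `σ_j` for `1 ≤ j ≤ n-1`), as a formal power
series in the variables `x_0, x_1, x_2, …` (representing `x_1, x_2, …`).
It is the sum of `x_(i_1) ⋯ x_(i_n)` over weakly increasing sequences
`i_1 ≤ ⋯ ≤ i_n` such that `i_j = i_(j+1)` forces `σ_j = +1`. -/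
def Qfun (R : Type) [CommRing R] (n : ℕ) (s : ℕ → ℤ) : MvPowerSeries ℕ R := fun d =>
  ((Set.ncard {f : Fin n → ℕ | Monotone f ∧
      (∀ (j : ℕ) (hj : j < n), 1 ≤ j → f ⟨j - 1, by omega⟩ = f ⟨j, hj⟩ → s j = 1) ∧
      ∑ k : Fin n, Finsupp.single (f k) 1 = d} : ℕ) : R)

/-- The Schur function `s_μ = Σ_(T ∈ SYT(μ)) Q_(σ(T))`. -/
def schurPS (R : Type) [CommRing R] (μ : YoungDiagram) : MvPowerSeries ℕ R :=
  ∑ᶠ T : SYT μ, Qfun R μ.card (sytSgn T)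

/-- Symmetry of a formal power series in `x_0, x_1, …`: invariance of the
coefficients under every permutation of the variables. -/
def MvPSSymmetric {R : Type} [CommRing R] (F : MvPowerSeries ℕ R) : Prop :=
  ∀ (g : Equiv.Perm ℕ) (d : ℕ →₀ ℕ),
    MvPowerSeries.coeff (R := R) (Finsupp.equivMapDomain g d) F = MvPowerSeries.coeff (R := R) d F

/-- Schur positivity: `F` is a nonnegative integer combination of Schur functions. -/
def SchurPositive (F : MvPowerSeries ℕ ℤ) : Prop :=
  ∃ a : YoungDiagram → ℕ, (Function.support a).Finite ∧
    F = ∑ᶠ μ : YoungDiagram, (a μ : ℤ) • schurPS ℤ μ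

/-! ### Words, ribbon words and the LLT graphs -/

/-- A standard word of length `n`: a bijection from positions `1,…,n` to
letters `1,…,n` (and `0` outside this range). -/
def IsStdWord (n : ℕ) (w : ℕ → ℕ) : Prop :=
  Set.BijOn w (Set.Icc 1 n) (Set.Icc 1 n) ∧ ∀ p, p ∉ Set.Icc 1 n → w p = 0

/-- A word of positive integers of length `n`. -/
def IsPosWord (n : ℕ) (w : ℕ → ℕ) : Prop :=
  (∀ p ∈ Set.Icc 1 n, 1 ≤ w p) ∧ ∀ p, p ∉ Set.Icc 1 n → w p = 0

/-- The `k`-descent set of the pair `(w, c)` (as a set of pairs of positions). -/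
def DesK (k n : ℕ) (w : ℕ → ℕ) (c : ℕ → ℤ) : Set (ℕ × ℕ) :=
  {pq : ℕ × ℕ | pq.1 ∈ Set.Icc 1 n ∧ pq.2 ∈ Set.Icc 1 n ∧ w pq.2 < w pq.1 ∧
    c pq.2 - c pq.1 = (k : ℤ)}

/-- The set of `k`-inversions of the pair `(w, c)`. -/
def InvK (k n : ℕ) (w : ℕ → ℕ) (c : ℕ → ℤ) : Set (ℕ × ℕ) :=
  {pq : ℕ × ℕ | pq.1 ∈ Set.Icc 1 n ∧ pq.2 ∈ Set.Icc 1 n ∧ w pq.2 < w pq.1 ∧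
    0 < c pq.2 - c pq.1 ∧ c pq.2 - c pq.1 < (k : ℤ)}

/-- The `k`-inversion number of `(w, c)`. -/
def invK (k n : ℕ) (w : ℕ → ℕ) (c : ℕ → ℤ) : ℕ := (InvK k n w c).ncard

/-- The pair `(w, c)` is a `k`-ribbon word. -/
def IsRibbonWord (k n : ℕ) (w : ℕ → ℕ) (c : ℕ → ℤ) : Prop :=
  ∀ p, 1 ≤ p → p + 1 ≤ n → c p = c (p + 1) →
    (∃ h, h ∈ Set.Icc 1 n ∧ c h = c p - (k : ℤ) ∧ w p < w h ∧ w h ≤ w (p + 1)) ∧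
    (∃ j, j ∈ Set.Icc 1 n ∧ c j = c p + (k : ℤ) ∧ w p ≤ w j ∧ w j < w (p + 1))

/-- The letter `a` appears to the left of the letter `b` in the word `w`. -/
def leftOf (n : ℕ) (w : ℕ → ℕ) (a b : ℕ) : Prop :=
  ∃ p q, p ∈ Set.Icc 1 n ∧ q ∈ Set.Icc 1 n ∧ p < q ∧ w p = a ∧ w q = b

/-- The descent signature of a word: `σ(w)_i = +1` iff `i` is left of `i+1`. -/
def wordSgn (n : ℕ) (w : ℕ → ℕ) : ℕ → ℤ := fun i =>
  if leftOf n w i (i + 1) then 1 else -1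

/-- The position of the letter `ℓ` in the word `w`. -/
def posOf (n : ℕ) (w : ℕ → ℕ) (ℓ : ℕ) : ℕ := sInf {p | p ∈ Set.Icc 1 n ∧ w p = ℓ}

/-- The involution `D_i^(k)` on standard words: if `i` lies between `i-1` and
`i+1` do nothing; otherwise apply `d_i` (switch the outer two of the letters
`i-1, i, i+1`) when `dist(i-1,i,i+1) > k`, and `d̃_i` (cycle the three letters
among their positions) when `dist(i-1,i,i+1) ≤ k`. -/
def Dk (k n : ℕ) (c : ℕ → ℤ) (i : ℕ) (w : ℕ → ℕ) : ℕ → ℕ :=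
  let p := posOf n w (i - 1)
  let q := posOf n w i
  let r := posOf n w (i + 1)
  if (p < q ∧ q < r) ∨ (r < q ∧ q < p) then w
  else
    let s1 := min p (min q r)
    let s3 := max p (max q r)
    let s2 := p + q + r - s1 - s3
    if (k : ℤ) < max |c p - c q| (max |c q - c r| |c p - c r|) then
      fun t => if t = s1 then w s3 else if t = s3 then w s1 else w t
    else if q = s1 then
      fun t => if t = s1 then w s2 else if t = s2 then w s3 else if t = s3 then w s1 else w t
    else
      fun t => if t = s1 then w s3 else if t = s2 then w s1 else if t = s3 then w s2 else w t

/-- The vertex set `V^(k)_(c,D)`: standard `k`-ribbon words with content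
vector `c` and `k`-descent set `D`. -/
def lltV (k n : ℕ) (c : ℕ → ℤ) (D : Set (ℕ × ℕ)) : Type :=
  {w : ℕ → ℕ // IsStdWord n w ∧ IsRibbonWord k n w c ∧ DesK k n w c = D}

instance lltV.finite (k n : ℕ) (c : ℕ → ℤ) (D : Set (ℕ × ℕ)) : Finite (lltV k n c D) := by
  apply Finite.of_injective
    (fun w : lltV k n c D => fun p : Fin (n + 1) => (⟨w.1 p, by
      rcases Classical.em ((p : ℕ) ∈ Set.Icc 1 n) with h | h
      · exact Nat.lt_succ_of_le (w.2.1.1.mapsTo h).2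
      · simp [w.2.1.2 _ h]⟩ : Fin (n + 1)))
  intro a b hab
  apply Subtype.ext
  funext p
  by_cases hp : p ∈ Set.Icc 1 n
  · have hlt : p < n + 1 := Nat.lt_succ_of_le hp.2
    exact congrArg Fin.val (congrFun hab ⟨p, hlt⟩)
  · rw [a.2.1.2 _ hp, b.2.1.2 _ hp]

/-- The signed, colored graph `G^(k)_(c,D)` on standard `k`-ribbon words with
content vector `c` and `k`-descent set `D`, with `i`-edges the pairs
`{w, D_i^(k)(w)}` over vertices `w` admitting an `i`-neighbor. -/
def lltGraph (k n : ℕ) (c : ℕ → ℤ) (D : Set (ℕ × ℕ)) : SCG (lltV k n c D) n n where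
  sgn w := wordSgn n w.1
  edge i v u := 1 < i ∧ i < n ∧ v ≠ u ∧
    ((wordSgn n v.1 (i - 1) = -wordSgn n v.1 i ∧ u.1 = Dk k n c i v.1) ∨
     (wordSgn n u.1 (i - 1) = -wordSgn n u.1 i ∧ v.1 = Dk k n c i u.1))
  sgn_pm := by
    intro v i _ _
    simp only [wordSgn]
    split
    · exact Or.inl rfl
    · exact Or.inr rfl
  edge_symm := by
    rintro i v u ⟨h1, h2, h3, h4⟩
    exact ⟨h1, h2, h3.symm, h4.symm⟩
  edge_ne := fun i v u h => h.2.2.1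
  edge_supp := fun i v u h => ⟨h.1, h.2.1⟩

/-- The descent set of a word. -/
def DesSet (n : ℕ) (w : ℕ → ℕ) : Finset ℕ :=
  (Finset.Icc 1 (n - 1)).filter fun p => w (p + 1) < w p

/-- The (skew) Schur function of the ribbon of size `n` whose descent set is
`E`, via its quasisymmetric expansion. -/
def ribbonSchurGF (n : ℕ) (E : Finset ℕ) : MvPowerSeries ℕ ℤ :=
  ∑ᶠ w : {w : ℕ → ℕ // IsStdWord n w ∧ DesSet n w = E}, Qfun ℤ n (wordSgn n w.1)

/-! ### Tuples of skew tableaux and LLT polynomials -/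

/-- A finite set of cells forming a skew shape `λ/ν`. -/
def IsSkewShape (S : Finset (ℕ × ℕ)) : Prop :=
  ∃ lam nu : YoungDiagram, nu ≤ lam ∧ S = lam.cells \ nu.cells

/-- A semistandard filling of the cell set `S`: positive entries on `S`, zero
elsewhere, weakly increasing along rows and strictly increasing along columns. -/
def SemistdOn (S : Finset (ℕ × ℕ)) (T : ℕ × ℕ → ℕ) : Prop :=
  (∀ x ∈ S, 1 ≤ T x) ∧ (∀ x, x ∉ S → T x = 0) ∧
  (∀ r c1 c2, (r, c1) ∈ S → (r, c2) ∈ S → c1 ≤ c2 → T (r, c1) ≤ T (r, c2)) ∧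
  (∀ r1 r2 cc, (r1, cc) ∈ S → (r2, cc) ∈ S → r1 < r2 → T (r1, cc) < T (r2, cc))

/-- A `k`-tuple of semistandard tableaux of shapes `S 0, …, S (k-1)`. -/
def SemistdTuple {k : ℕ} (S : Fin k → Finset (ℕ × ℕ)) (T : Fin k → ℕ × ℕ → ℕ) : Prop :=
  ∀ i, SemistdOn (S i) (T i)

/-- The shifted content `c̃ = k·c(x) + i` of a cell `x` of the `i`-th shape. -/
def shiftedContent (k : ℕ) (x : Fin k × ℕ × ℕ) : ℤ :=
  (k : ℤ) * cellContent x.2 + (x.1 : ℤ)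

/-- `e` enumerates the cells of the tuple of shapes `S` in content reading
order (increasing shifted content, southwest to northeast on diagonals). -/
def IsCellEnum (k n : ℕ) (S : Fin k → Finset (ℕ × ℕ)) (e : ℕ → Fin k × ℕ × ℕ) : Prop :=
  Set.BijOn e (Set.Icc 1 n) {ix : Fin k × ℕ × ℕ | ix.2 ∈ S ix.1} ∧
  ∀ p q, p ∈ Set.Icc 1 n → q ∈ Set.Icc 1 n → p < q →
    (shiftedContent k (e p) < shiftedContent k (e q) ∨
     (shiftedContent k (e p) = shiftedContent k (e q) ∧ (e p).2.2 < (e q).2.2))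

/-- The content reading word of a tuple `T`, via the enumeration `e`. -/
def readWord (n : ℕ) {k : ℕ} (e : ℕ → Fin k × ℕ × ℕ) (T : Fin k → ℕ × ℕ → ℕ) : ℕ → ℕ :=
  fun p => if p ∈ Set.Icc 1 n then T (e p).1 (e p).2 else 0

/-- The weight of a tuple of tableaux, as an exponent vector (the variable
`x_j` records entries equal to `j+1`). -/
def tupleWeight {k : ℕ} (S : Fin k → Finset (ℕ × ℕ)) (T : Fin k → ℕ × ℕ → ℕ) : ℕ →₀ ℕ :=
  ∑ i : Fin k, ∑ x ∈ S i, Finsupp.single (T i x - 1) 1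

/-- The number of `k`-inversions of a tuple of tableaux. -/
def invkTuple (k : ℕ) (S : Fin k → Finset (ℕ × ℕ)) (T : Fin k → ℕ × ℕ → ℕ) : ℕ :=
  Set.ncard {p : (Fin k × ℕ × ℕ) × (Fin k × ℕ × ℕ) |
    p.1.2 ∈ S p.1.1 ∧ p.2.2 ∈ S p.2.1 ∧
    0 < shiftedContent k p.2 - shiftedContent k p.1 ∧
    shiftedContent k p.2 - shiftedContent k p.1 < (k : ℤ) ∧
    T p.2.1 p.2.2 < T p.1.1 p.1.2}

/-- The LLT polynomial `G̃^(k)_μ(x; q) = Σ_T q^(inv_k(T)) x^T`, as a formal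
power series in `x` with coefficients in `ℤ[q]`. -/
def LLTpoly (k : ℕ) (S : Fin k → Finset (ℕ × ℕ)) : MvPowerSeries ℕ (Polynomial ℤ) :=
  fun d => ∑ᶠ T : {T : Fin k → ℕ × ℕ → ℕ // SemistdTuple S T ∧ tupleWeight S T = d},
    (Polynomial.X : Polynomial ℤ) ^ invkTuple k S T.1

/-- The weight of a word. -/
def wordWeight (n : ℕ) (w : ℕ → ℕ) : ℕ →₀ ℕ :=
  ∑ p ∈ Finset.Icc 1 n, Finsupp.single (w p - 1) 1

/-- The generating function `Σ_((w,c) ∈ WRib_k(c,D)) q^(inv_k(w,c)) x^w` of all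
`k`-ribbon words with content vector `c` and `k`-descent set `D`. -/
def ribbonWordGF (k n : ℕ) (c : ℕ → ℤ) (D : Set (ℕ × ℕ)) : MvPowerSeries ℕ (Polynomial ℤ) :=
  fun d => ∑ᶠ w : {w : ℕ → ℕ // IsPosWord n w ∧ IsRibbonWord k n w c ∧
      DesK k n w c = D ∧ wordWeight n w = d},
    (Polynomial.X : Polynomial ℤ) ^ invK k n w.1 c

/-! ### Packages, types, local Schur positivity, axiom 4' and D graphs -/

namespace SCG

variable {V W : Type} {n N : ℕ}

/-- The `i`-package of a vertex: its connected component using only the edges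
of colors `≤ i-3` or `≥ i+3`. -/
def packReach (G : SCG V n N) (i : ℕ) (v w : V) : Prop :=
  G.ReachS {j | j + 3 ≤ i ∨ i + 3 ≤ j} v w

/-- `w` admits a `j`-neighbor. -/
def Admits (G : SCG V n N) (j : ℕ) (w : V) : Prop := G.sgn w (j - 1) = -G.sgn w j

/-- `w` has `i`-type W. -/
def TypeW (G : SCG V n N) (i : ℕ) (w : V) : Prop :=
  G.Admits (i - 1) w ∧ ∃ x, G.edge (i - 1) w x ∧ G.sgn x i = -G.sgn w i

/-- `w` has `i`-type A. -/
def TypeA (G : SCG V n N) (i : ℕ) (w : V) : Prop :=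
  ¬G.TypeW i w ∧ ¬G.Admits (i - 2) w

/-- `w` has `i`-type B. -/
def TypeB (G : SCG V n N) (i : ℕ) (w : V) : Prop :=
  ¬G.TypeW i w ∧ G.Admits (i - 2) w ∧ ∃ x, G.edge (i - 2) w x ∧
    ((G.Admits (i - 1) w ∧ G.sgn w (i - 1) = -G.sgn x (i - 1)) ∨
     (¬G.Admits (i - 1) w ∧ ∃ z, G.edge (i - 1) x z ∧ G.sgn w i = -G.sgn z i))

/-- `w` has `i`-type C. -/
def TypeC (G : SCG V n N) (i : ℕ) (w : V) : Prop :=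
  ¬G.TypeW i w ∧ G.Admits (i - 2) w ∧ ∃ x, G.edge (i - 2) w x ∧
    ((G.Admits (i - 1) w ∧ G.sgn w (i - 1) = G.sgn x (i - 1)) ∨
     (¬G.Admits (i - 1) w ∧ ∃ z, G.edge (i - 1) x z ∧ G.sgn w i = G.sgn z i))

/-- Twice the number of edges of colors `i-1, i` in the connected component of
`v0` under `E_(i-1) ∪ E_i` (each edge is counted once for each orientation). -/
def twoColorEdgeCount (G : SCG V n N) (i : ℕ) (v0 : V) : ℕ :=
  Set.ncard {t : ℕ × V × V | (t.1 = i - 1 ∨ t.1 = i) ∧ G.edge t.1 t.2.1 t.2.2 ∧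
    G.ReachS {i - 1, i} v0 t.2.1}

/-- Axiom 4'a: every nontrivial connected component of `E_(i-1) ∪ E_i` has
either two or four edges. -/
def Ax4a (G : SCG V n N) : Prop :=
  ∀ i, 2 < i → i < n → ∀ v0 : V,
    (∃ a b j, G.ReachS {i - 1, i} v0 a ∧ (j = i - 1 ∨ j = i) ∧ G.edge j a b) →
    G.twoColorEdgeCount i v0 = 4 ∨ G.twoColorEdgeCount i v0 = 8

/-- Axiom 4'b. -/
def Ax4b (G : SCG V n N) : Prop :=
  ∀ i, 3 < i → i < n → ∀ w x z, G.edge (i - 2) w x → G.edge i w z →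
    G.sgn w (i - 1) = -G.sgn x (i - 1) → G.sgn w (i - 2) = -G.sgn z (i - 2) →
    ∃ y, G.edge (i - 1) w y ∧ (y = x ∨ y = z)

/-- Axiom 4'c. -/
def Ax4c (G : SCG V n N) : Prop :=
  ∀ i, 3 < i → i < n → ∀ w x, G.edge (i - 2) w x → G.TypeC i w → G.TypeW (i + 1) w →
    G.TypeC i x ∧ G.TypeW (i + 1) x

/-- The restricted degree-4 signature of a vertex. -/
def sig3 (G : SCG V n N) (i : ℕ) (v : V) : ℕ → ℤ := fun j =>
  if j = 1 then G.sgn v (i - 2) else if j = 2 then G.sgn v (i - 1) else G.sgn v i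

/-- The restricted degree-5 signature of a vertex. -/
def sig4 (G : SCG V n N) (i : ℕ) (v : V) : ℕ → ℤ := fun j =>
  if j = 1 then G.sgn v (i - 3) else if j = 2 then G.sgn v (i - 2)
  else if j = 3 then G.sgn v (i - 1) else G.sgn v i

/-- Local Schur positivity: the restricted degree-4 and degree-5 generating
functions of the two- and three-color connected components are symmetric and
Schur positive. -/
def LSP (G : SCG V n N) : Prop :=
  (∀ i, 2 < i → i < n → ∀ v0 : V,
    MvPSSymmetric (∑ᶠ v : {v : V // G.ReachS {i - 1, i} v0 v}, Qfun ℤ 4 (G.sig3 i v.1)) ∧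
    SchurPositive (∑ᶠ v : {v : V // G.ReachS {i - 1, i} v0 v}, Qfun ℤ 4 (G.sig3 i v.1))) ∧
  (∀ i, 3 < i → i < n → ∀ v0 : V,
    MvPSSymmetric (∑ᶠ v : {v : V // G.ReachS {i - 2, i - 1, i} v0 v}, Qfun ℤ 5 (G.sig4 i v.1)) ∧
    SchurPositive (∑ᶠ v : {v : V // G.ReachS {i - 2, i - 1, i} v0 v}, Qfun ℤ 5 (G.sig4 i v.1)))

/-- A D graph: a locally Schur positive signed colored graph satisfying dual
equivalence axioms 1, 2, 3 and 5 together with axiom 4'. -/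
def IsDGraph (G : SCG V n N) : Prop :=
  G.LSP ∧ G.Ax1 ∧ G.Ax2 ∧ G.Ax3 ∧ G.Ax5 ∧ G.Ax4a ∧ G.Ax4b ∧ G.Ax4c

/-- The set `W_i(G)` of vertices of `i`-type W whose `(i-1)`-neighbor and
`i`-neighbor differ. -/
def Wset (G : SCG V n N) (i : ℕ) : Set V :=
  {w | G.TypeW i w ∧ ∀ x y, G.edge (i - 1) w x → G.edge i w y → x ≠ y}

/-- The set `X_i(G)` of vertices of `i`-type C with no `(i-1)`-neighbor such
that `E_(i-2) E_i ≠ E_i E_(i-2)` at the vertex. -/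
def Xset (G : SCG V n N) (i : ℕ) : Set V :=
  {x | G.TypeC i x ∧ ¬G.Admits (i - 1) x ∧
    ∀ a b, (∃ z, G.edge i x z ∧ G.edge (i - 2) z a) →
      (∃ z, G.edge (i - 2) x z ∧ G.edge i z b) → a ≠ b}

/-- `f` is an isomorphism between the `i`-packages of `w` and `u`: a bijection
preserving the truncated signature coordinates `σ_1, …, σ_(i-3), σ_(i+2), …,
σ_(N-1)` and all edges of colors `≤ i-3` or `≥ i+3`. -/
def PackIso (G : SCG V n N) (i : ℕ) (w u : V)
    (f : {v : V // G.packReach i w v} → {v : V // G.packReach i u v}) : Prop :=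
  Function.Bijective f ∧
  (∀ v j, 1 ≤ j → (j + 3 ≤ i ∨ (i + 2 ≤ j ∧ j < N)) → G.sgn (f v).1 j = G.sgn v.1 j) ∧
  ∀ j, j + 3 ≤ i ∨ i + 3 ≤ j → ∀ a b, G.edge j a.1 b.1 ↔ G.edge j (f a).1 (f b).1

/-- One half of the new `i`-edge relation used to redefine `E_i` from a package
isomorphism `f` between the `i`-packages of `w` and `u`. -/
def newEdgePhi (G : SCG V n N) (i : ℕ) (w u : V)
    (f : {v : V // G.packReach i w v} → {v : V // G.packReach i u v}) (a b : V) : Prop :=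
  (∃ ha : G.packReach i w a, b = (f ⟨a, ha⟩).1) ∨
  (∃ a' b', ∃ ha' : G.packReach i w a', G.edge i a a' ∧ b' = (f ⟨a', ha'⟩).1 ∧ G.edge i b' b) ∨
  (G.edge i a b ∧ ¬G.packReach i w a ∧ ¬G.packReach i u a ∧
    ¬G.packReach i w b ∧ ¬G.packReach i u b)

/-- The graph obtained from `G` by replacing the edges `E_i` according to the
involution determined by the package isomorphism `f` (this is `φ_i^w(G)`,
and also `ψ_i^x(G)` when applied to the appropriate packages). -/
def phiGraph (G : SCG V n N) (i : ℕ) (hi : 1 < i) (hin : i < n) (w u : V)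
    (f : {v : V // G.packReach i w v} → {v : V // G.packReach i u v}) : SCG V n N where
  sgn := G.sgn
  edge j a b :=
    if j = i then a ≠ b ∧ (G.newEdgePhi i w u f a b ∨ G.newEdgePhi i w u f b a)
    else G.edge j a b
  sgn_pm := G.sgn_pm
  edge_symm := by
    intro j a b h
    by_cases hj : j = i
    · rw [if_pos hj] at h ⊢
      exact ⟨h.1.symm, h.2.symm⟩
    · rw [if_neg hj] at h ⊢
      exact G.edge_symm j a b h
  edge_ne := by
    intro j a b h
    by_cases hj : j = i
    · rw [if_pos hj] at h; exact h.1
    · rw [if_neg hj] at h; exact G.edge_ne j a b h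
  edge_supp := by
    intro j a b h
    by_cases hj : j = i
    · subst hj; exact ⟨hi, hin⟩
    · rw [if_neg hj] at h; exact G.edge_supp j a b h

end SCG

/-! ### Fillings and Macdonald polynomials via Haglund's formula -/

/-- The weight of a filling of a Young diagram. -/
def fillingWeight (ρ : YoungDiagram) (S : ℕ × ℕ → ℕ) : ℕ →₀ ℕ :=
  ∑ x ∈ ρ.cells, Finsupp.single (S x - 1) 1

/-- The descent set of a filling: cells not in the first row whose entry
exceeds the entry immediately below (i.e. south, in French convention). -/
def macDes (ρ : YoungDiagram) (S : ℕ × ℕ → ℕ) : Set (ℕ × ℕ) :=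
  {x | x ∈ ρ.cells ∧ 1 ≤ x.1 ∧ S (x.1 - 1, x.2) < S x}

/-- The arm length of a cell. -/
def armLen (ρ : YoungDiagram) (x : ℕ × ℕ) : ℕ := Set.ncard {c' | x.2 < c' ∧ (x.1, c') ∈ ρ.cells}

/-- The leg length of a cell. -/
def legLen (ρ : YoungDiagram) (x : ℕ × ℕ) : ℕ := Set.ncard {r' | x.1 < r' ∧ (r', x.2) ∈ ρ.cells}

/-- The major index of a filling. -/
def macMaj (ρ : YoungDiagram) (S : ℕ × ℕ → ℕ) : ℕ :=
  (macDes ρ S).ncard + ∑ᶠ x ∈ macDes ρ S, legLen ρ x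

/-- The set of inversion pairs (attacking pairs in reading order with the first
entry larger). -/
def macInvSet (ρ : YoungDiagram) (S : ℕ × ℕ → ℕ) : Set ((ℕ × ℕ) × (ℕ × ℕ)) :=
  {p | p.1 ∈ ρ.cells ∧ p.2 ∈ ρ.cells ∧
    ((p.1.1 = p.2.1 ∧ p.1.2 < p.2.2) ∨ (p.1.1 = p.2.1 + 1 ∧ p.2.2 < p.1.2)) ∧
    S p.2 < S p.1}

/-- The inversion statistic of a filling. -/
def macInv (ρ : YoungDiagram) (S : ℕ × ℕ → ℕ) : ℕ :=
  (macInvSet ρ S).ncard - ∑ᶠ x ∈ macDes ρ S, armLen ρ x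

/-- The transformed Macdonald polynomial via Haglund's formula
`H̃_μ(x; q, t) = Σ_S q^(inv S) t^(maj S) x^S`, with `q = X 0` and `t = X 1`. -/
def macdonald (ρ : YoungDiagram) : MvPowerSeries ℕ (MvPolynomial (Fin 2) ℤ) :=
  fun d => ∑ᶠ S : {S : ℕ × ℕ → ℕ //
      (∀ x ∈ ρ.cells, 1 ≤ S x) ∧ (∀ x, x ∉ ρ.cells → S x = 0) ∧ fillingWeight ρ S = d},
    (MvPolynomial.X 0 : MvPolynomial (Fin 2) ℤ) ^ macInv ρ S.1 *
      (MvPolynomial.X 1 : MvPolynomial (Fin 2) ℤ) ^ macMaj ρ S.1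

/-! ### Augmented standard dual equivalence graphs -/

/-- Standard tableaux of shape `ρ` augmented by the fixed filling `A` on the
entries `n+1, …, |ρ|` (the cell of the entry `v` being `A v`). -/
def AugSYT (ρ : YoungDiagram) (n : ℕ) (A : ℕ → ℕ × ℕ) : Type :=
  {T : SYT ρ // ∀ m : Fin ρ.card, n ≤ (m : ℕ) → T.cellOf m = A ((m : ℕ) + 1)}

instance (ρ : YoungDiagram) (n : ℕ) (A : ℕ → ℕ × ℕ) : Finite (AugSYT ρ n A) := by
  unfold AugSYT; infer_instance

/-- The augmented standard dual equivalence graph `G_(λ,A)`, a signed colored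
graph of type `(n, N)` on standard tableaux of shape `ρ` (of size `N`)
restricting to `A` on `ρ/λ`, with edges the elementary dual equivalences for
`i-1, i, i+1` with `i < n`. -/
def augDEG (n N : ℕ) (ρ : YoungDiagram) (hρ : ρ.card = N) (A : ℕ → ℕ × ℕ) :
    SCG (AugSYT ρ n A) n N where
  sgn T := sytSgn T.1
  edge i T U := i < n ∧ T ≠ U ∧ (stdEdgeCore ρ i T.1 U.1 ∨ stdEdgeCore ρ i U.1 T.1)
  sgn_pm := by
    intro v i _ _
    simp only [sytSgn]
    split
    · exact Or.inl rfl
    · exact Or.inr rfl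
  edge_symm := by
    rintro i T U ⟨h1, h2, h3⟩
    exact ⟨h1, h2.symm, h3.symm⟩
  edge_ne := fun i T U h => h.2.1
  edge_supp := by
    rintro i T U ⟨h1, h2, h3 | h3⟩ <;> exact ⟨h3.1, h1⟩

end

/-! Along an `i`-edge `{T, U}` of `G_λ` the fibers of `φ` are in bijection: by axiom 1 each
vertex over `T` has a unique `i`-neighbor, and `φ` sends it to the unique `i`-neighbor `U` of `T`.
So it suffices that `G_λ` is connected, which is proved by induction on `|λ|`. Tableaux with the
largest entry `n` in the same corner are connected through `G_(λ ∖ corner)`. For corners `c, c''`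
in consecutive corner rows, some corner `d` of `λ ∖ {c, c''}` has content strictly between theirs;
placing `n - 2` at `d`, the two fillings of `c, c''` by `n - 1, n` differ by one elementary dual
equivalence, which moves `n` from one corner to the other. -/

section Corners

variable {α β : Type*} [LinearOrder α] [LinearOrder β] {P : α × β → Prop} {c d : α × β}

theorem Maximal.snd_lt_of_fst_lt (hc : Maximal P c) (hd : P d) (h : c.1 < d.1) : d.2 < c.2 := by
  by_contra! h'
  exact h.ne (congrArg Prod.fst (hc.eq_of_le hd ⟨h.le, h'⟩))

theorem Maximal.eq_of_fst_eq (hc : Maximal P c) (hd : Maximal P d) (h : c.1 = d.1) : c = d := by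
  rcases le_total c.2 d.2 with h' | h'
  · exact hc.eq_of_le hd.1 ⟨h.le, h'⟩
  · exact (hd.eq_of_le hc.1 ⟨h.ge, h'⟩).symm

end Corners

theorem Maximal.finset_erase {α : Type*} [LE α] [DecidableEq α] {s : Finset α} {x y : α}
    (hx : Maximal (· ∈ s) x) (hxy : x ≠ y) : Maximal (· ∈ s.erase y) x :=
  ⟨Finset.mem_erase.2 ⟨hxy, hx.1⟩, fun _ hz => hx.2 (Finset.mem_of_mem_erase hz)⟩

namespace YoungDiagram

theorem exists_cells_eq_erase (μ : YoungDiagram) {c : ℕ × ℕ} (hc : Maximal (· ∈ μ.cells) c) :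
    ∃ ν : YoungDiagram, ν.cells = μ.cells.erase c := by
  refine ⟨⟨μ.cells.erase c, fun x y hyx hx => ?_⟩, rfl⟩
  rw [Finset.mem_coe, Finset.mem_erase] at hx ⊢
  refine ⟨?_, μ.isLowerSet hyx hx.2⟩
  rintro rfl
  exact hx.1 (hc.eq_of_le hx.2 hyx).symm

theorem card_add_one_of_cells_eq_erase {μ ν : YoungDiagram} {c : ℕ × ℕ} (hc : c ∈ μ.cells)
    (hν : ν.cells = μ.cells.erase c) : ν.card + 1 = μ.card := by
  rw [YoungDiagram.card, hν]
  exact Finset.card_erase_add_one hc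

theorem card_le_of_cells_eq_erase {μ ν : YoungDiagram} {c : ℕ × ℕ}
    (hν : ν.cells = μ.cells.erase c) : ν.card ≤ μ.card := by
  rw [YoungDiagram.card, hν]
  exact Finset.card_erase_le

end YoungDiagram

namespace SYT

variable {μ ν : YoungDiagram} {c : ℕ × ℕ}

theorem cell_eq_cellOf (T : SYT μ) {a : ℕ} (h1 : 1 ≤ a) (h2 : a ≤ μ.card) :
    T.cell a = T.cellOf ⟨a - 1, by omega⟩ :=
  dif_pos ⟨h1, h2⟩

theorem cell_mem (T : SYT μ) {a : ℕ} (h1 : 1 ≤ a) (h2 : a ≤ μ.card) : T.cell a ∈ μ.cells := by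
  rw [T.cell_eq_cellOf h1 h2]
  exact T.mem_cells _

theorem ext_cell {T U : SYT μ} (h : ∀ a, 1 ≤ a → a ≤ μ.card → T.cell a = U.cell a) : T = U := by
  obtain ⟨f, _⟩ := T
  obtain ⟨g, _⟩ := U
  congr
  funext k
  simpa [cell_eq_cellOf _ (Nat.le_add_left 1 k) k.isLt] using h (k + 1) (by omega) k.isLt

theorem exists_cellOf_eq (T : SYT μ) {x : ℕ × ℕ} (hx : x ∈ μ.cells) : ∃ k, T.cellOf k = x := by
  have himage : Finset.univ.image T.cellOf = μ.cells :=
    Finset.eq_of_subset_of_card_le (by simpa [Finset.subset_iff] using T.mem_cells)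
      (by rw [Finset.card_image_of_injective _ T.inj]; simp)
  obtain ⟨k, -, hk⟩ := Finset.mem_image.1 (himage ▸ hx)
  exact ⟨k, hk⟩

theorem le_of_cellOf_le (T : SYT μ) {k l : Fin μ.card} (h : T.cellOf k ≤ T.cellOf l) : k ≤ l := by
  obtain ⟨m, hm⟩ := T.exists_cellOf_eq (x := ((T.cellOf k).1, (T.cellOf l).2))
    (μ.isLowerSet (show ((T.cellOf k).1, (T.cellOf l).2) ≤ T.cellOf l from ⟨h.1, le_rfl⟩)
      (T.mem_cells l))
  have hkm : k ≤ m := by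
    rcases h.2.lt_or_eq with h2 | h2
    · exact (T.row_mono k m (by rw [hm]) (by rw [hm]; exact h2)).le
    · exact (T.inj (hm.trans (Prod.ext rfl h2.symm :
        ((T.cellOf k).1, (T.cellOf l).2) = T.cellOf k)).symm).le
  have hml : m ≤ l := by
    rcases h.1.lt_or_eq with h1 | h1
    · exact (T.col_mono m l (by rw [hm]) (by rw [hm]; exact h1)).le
    · exact (T.inj (hm.trans (Prod.ext h1 rfl :
        ((T.cellOf k).1, (T.cellOf l).2) = T.cellOf l))).le
  exact hkm.trans hml

theorem maximal_cell_card (T : SYT μ) (h : 0 < μ.card) : Maximal (· ∈ μ.cells) (T.cell μ.card) := by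
  refine ⟨T.cell_mem h le_rfl, fun x hx hle => ?_⟩
  obtain ⟨k, rfl⟩ := T.exists_cellOf_eq hx
  rw [T.cell_eq_cellOf h le_rfl] at hle ⊢
  have hk : μ.card - 1 ≤ k := T.le_of_cellOf_le hle
  rw [show k = ⟨μ.card - 1, by omega⟩ from Fin.ext (by have := k.isLt; simp only; omega)]

def ofMono (f : Fin μ.card → ℕ × ℕ) (mem : ∀ k, f k ∈ μ.cells) (inj : Function.Injective f)
    (mono : ∀ k l, f k ≤ f l → k ≤ l) : SYT μ where
  cellOf := f
  mem_cells := mem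
  inj := inj
  row_mono k l hr hc := (mono k l ⟨hr.le, hc.le⟩).lt_of_ne (by rintro rfl; exact hc.ne rfl)
  col_mono k l hc hr := (mono k l ⟨hr.le, hc.le⟩).lt_of_ne (by rintro rfl; exact hr.ne rfl)

def extend (hc : Maximal (· ∈ μ.cells) c) (hν : ν.cells = μ.cells.erase c) (U : SYT ν) : SYT μ :=
  have hcard := YoungDiagram.card_add_one_of_cells_eq_erase hc.1 hν
  have hU : ∀ k, U.cellOf k ≠ c ∧ U.cellOf k ∈ μ.cells := fun k =>
    Finset.mem_erase.1 (hν ▸ U.mem_cells k)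
  ofMono (fun k => if h : (k : ℕ) < ν.card then U.cellOf ⟨k, h⟩ else c)
    (fun k => by
      split
      · exact (hU _).2
      · exact hc.1)
    (fun k l hkl => by
      beta_reduce at hkl
      split at hkl <;> split at hkl
      · exact Fin.ext (by simpa using U.inj hkl)
      · exact absurd hkl (hU _).1
      · exact absurd hkl.symm (hU _).1
      · exact Fin.ext (by omega))
    (fun k l hkl => by
      split at hkl <;> split at hkl
      · exact U.le_of_cellOf_le hkl
      · exact Fin.le_def.2 (by omega)
      · exact absurd (hc.eq_of_le (hU _).2 hkl).symm (hU _).1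
      · exact Fin.le_def.2 (by omega))

theorem extend_cell_of_le (hc : Maximal (· ∈ μ.cells) c) (hν : ν.cells = μ.cells.erase c)
    (U : SYT ν) {a : ℕ} (h1 : 1 ≤ a) (h2 : a ≤ ν.card) : (U.extend hc hν).cell a = U.cell a := by
  have hcard := YoungDiagram.card_add_one_of_cells_eq_erase hc.1 hν
  rw [cell_eq_cellOf _ h1 (by omega), cell_eq_cellOf _ h1 h2]
  exact dif_pos (by simp only; omega)

theorem extend_cell_card (hc : Maximal (· ∈ μ.cells) c) (hν : ν.cells = μ.cells.erase c)
    (U : SYT ν) : (U.extend hc hν).cell μ.card = c := by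
  have hcard := YoungDiagram.card_add_one_of_cells_eq_erase hc.1 hν
  rw [cell_eq_cellOf _ (by omega) le_rfl]
  exact dif_neg (by simp only; omega)

theorem extend_injective (hc : Maximal (· ∈ μ.cells) c) (hν : ν.cells = μ.cells.erase c) :
    Function.Injective (extend hc hν) := by
  intro U U' h
  refine ext_cell fun a h1 h2 => ?_
  rw [← extend_cell_of_le hc hν U h1 h2, ← extend_cell_of_le hc hν U' h1 h2, h]

def restrict (T : SYT μ) (hν : ν.cells = μ.cells.erase (T.cell μ.card)) : SYT ν where
  cellOf k := T.cellOf ⟨k, k.isLt.trans_le (YoungDiagram.card_le_of_cells_eq_erase hν)⟩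
  mem_cells k := by
    have hpos : 0 < μ.card := k.pos.trans_le (YoungDiagram.card_le_of_cells_eq_erase hν)
    have hcard := YoungDiagram.card_add_one_of_cells_eq_erase (T.cell_mem hpos le_rfl) hν
    rw [hν]
    refine Finset.mem_erase.2 ⟨fun h => ?_, T.mem_cells _⟩
    have := congrArg Fin.val (T.inj (h.trans (T.cell_eq_cellOf hpos le_rfl)))
    simp only at this
    omega
  inj k l h := Fin.ext (by simpa using T.inj h)
  row_mono k l hr hc := T.row_mono _ _ hr hc
  col_mono k l hr hc := T.col_mono _ _ hr hc

theorem restrict_cell (T : SYT μ) (hν : ν.cells = μ.cells.erase (T.cell μ.card)) {a : ℕ}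
    (h1 : 1 ≤ a) (h2 : a ≤ ν.card) : (T.restrict hν).cell a = T.cell a := by
  rw [cell_eq_cellOf _ h1 h2,
    cell_eq_cellOf _ h1 (h2.trans (YoungDiagram.card_le_of_cells_eq_erase hν))]
  rfl

theorem exists_extend_eq (T : SYT μ) (hc : Maximal (· ∈ μ.cells) c)
    (hν : ν.cells = μ.cells.erase c) (hT : T.cell μ.card = c) :
    ∃ U : SYT ν, U.extend hc hν = T := by
  subst hT
  have hcard := YoungDiagram.card_add_one_of_cells_eq_erase hc.1 hν
  refine ⟨T.restrict hν, ext_cell fun a h1 h2 => ?_⟩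
  rcases Nat.lt_or_ge a μ.card with ha | ha
  · rw [extend_cell_of_le _ _ _ h1 (by omega), restrict_cell _ _ h1 (by omega)]
  · rw [le_antisymm h2 ha, extend_cell_card]

theorem nonempty (μ : YoungDiagram) : Nonempty (SYT μ) := by
  induction h : μ.card generalizing μ with
  | zero =>
    have : IsEmpty (Fin μ.card) := h ▸ inferInstance
    exact ⟨⟨isEmptyElim, isEmptyElim, fun k => isEmptyElim k, fun k => isEmptyElim k,
      fun k => isEmptyElim k⟩⟩
  | succ m ih =>
    obtain ⟨c, hc⟩ := μ.cells.exists_maximal (Finset.card_pos.1 (by change 0 < μ.card; omega))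
    obtain ⟨ν, hν⟩ := μ.exists_cells_eq_erase hc
    have hcard := YoungDiagram.card_add_one_of_cells_eq_erase hc.1 hν
    obtain ⟨U⟩ := ih ν (by omega)
    exact ⟨U.extend hc hν⟩

theorem exists_cell_card_eq (hc : Maximal (· ∈ μ.cells) c) : ∃ T : SYT μ, T.cell μ.card = c := by
  obtain ⟨ν, hν⟩ := μ.exists_cells_eq_erase hc
  obtain ⟨U⟩ := SYT.nonempty ν
  exact ⟨U.extend hc hν, extend_cell_card hc hν U⟩

end SYT

section Edges

variable {μ ν : YoungDiagram} {c : ℕ × ℕ} {T U U' : SYT μ} {a b i : ℕ}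

theorem swapEq.cell_left (sw : swapEq T U a b) (h1 : 1 ≤ a) (h2 : a ≤ μ.card) :
    U.cell a = T.cell b := by
  simpa using sw a h1 h2

theorem swapEq.cell_right (sw : swapEq T U a b) (hab : a ≠ b) (h1 : 1 ≤ b) (h2 : b ≤ μ.card) :
    U.cell b = T.cell a := by
  simpa [hab.symm] using sw b h1 h2

theorem swapEq.symm (sw : swapEq T U a b) (hab : a ≠ b) (ha1 : 1 ≤ a) (ha2 : a ≤ μ.card)
    (hb1 : 1 ≤ b) (hb2 : b ≤ μ.card) : swapEq U T a b := by
  intro x h1 h2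
  split_ifs with hxa hxb
  · rw [hxa, sw.cell_right hab hb1 hb2]
  · rw [hxb, sw.cell_left ha1 ha2]
  · simpa [hxa, hxb] using (sw x h1 h2).symm

theorem swapEq.unique (sw : swapEq T U a b) (sw' : swapEq T U' a b) : U = U' :=
  SYT.ext_cell fun x h1 h2 => (sw x h1 h2).trans (sw' x h1 h2).symm

theorem posBetween.not_swap {d : ℕ} (h : posBetween T a b d) : ¬posBetween T a d b := by
  simp only [posBetween, readBefore, cellContent] at *
  omega

theorem stdEdgeCore.symm (h : stdEdgeCore μ i T U) : stdEdgeCore μ i U T := by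
  obtain ⟨hi1, hi2, ⟨pb, sw⟩ | ⟨pb, sw⟩⟩ := h
  · refine ⟨hi1, hi2, Or.inl ⟨?_, sw.symm (by omega) (by omega) (by omega) (by omega) hi2.le⟩⟩
    have h3 := sw (i + 1) (by omega) (by omega)
    simp only [show i + 1 ≠ i - 1 by omega, show i + 1 ≠ i by omega, if_false] at h3
    simp only [posBetween, sw.cell_left (by omega) (by omega),
      sw.cell_right (by omega) (by omega) hi2.le, h3] at pb ⊢
    exact pb.symm
  · refine ⟨hi1, hi2, Or.inr ⟨?_, sw.symm (by omega) (by omega) hi2.le (by omega) hi2⟩⟩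
    have h3 := sw (i - 1) (by omega) (by omega)
    simp only [show i - 1 ≠ i by omega, show i - 1 ≠ i + 1 by omega, if_false] at h3
    simp only [posBetween, sw.cell_left (by omega) hi2.le,
      sw.cell_right (by omega) (by omega) hi2, h3] at pb ⊢
    exact pb.symm

/-- `i` is not the middle one of `i - 1, i, i + 1` in reading order, so exactly one of
`i - 1`, `i` is a descent. -/
theorem stdEdgeCore.sytSgn_sub_one (h : stdEdgeCore μ i T U) :
    sytSgn T (i - 1) = -sytSgn T i := by
  obtain ⟨hi1, -, hpb⟩ := h
  replace hpb := hpb.imp And.left And.left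
  rw [sytSgn, sytSgn, Nat.sub_add_cancel (by omega : 1 ≤ i)]
  simp only [posBetween, readBefore, cellContent] at hpb
  split_ifs with h1 h2 h2 <;> simp only [readBefore, cellContent] at h1 h2 <;> omega

theorem stdEdgeCore.unique (h : stdEdgeCore μ i T U) (h' : stdEdgeCore μ i T U') : U = U' := by
  obtain ⟨-, -, ⟨pb, sw⟩ | ⟨pb, sw⟩⟩ := h <;> obtain ⟨-, -, ⟨pb', sw'⟩ | ⟨pb', sw'⟩⟩ := h'
  · exact sw.unique sw'
  · exact absurd pb' pb.not_swap
  · exact absurd pb pb'.not_swap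
  · exact sw.unique sw'

theorem stdDEG_edge_sgn {n : ℕ} (h : μ.card = n) (hTU : (stdDEG n μ h).edge i T U) :
    (stdDEG n μ h).sgn T (i - 1) = -(stdDEG n μ h).sgn T i :=
  (hTU.2.elim id stdEdgeCore.symm).sytSgn_sub_one

theorem stdDEG_edge_unique {n : ℕ} (h : μ.card = n) (hTU : (stdDEG n μ h).edge i T U)
    (hTU' : (stdDEG n μ h).edge i T U') : U = U' :=
  (hTU.2.elim id stdEdgeCore.symm).unique (hTU'.2.elim id stdEdgeCore.symm)

theorem swapEq.extend {U U' : SYT ν} (hc : Maximal (· ∈ μ.cells) c)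
    (hν : ν.cells = μ.cells.erase c) (sw : swapEq U U' a b) (ha : 1 ≤ a) (ha' : a ≤ ν.card)
    (hb : 1 ≤ b) (hb' : b ≤ ν.card) :
    swapEq (U.extend hc hν) (U'.extend hc hν) a b := by
  have hcard := YoungDiagram.card_add_one_of_cells_eq_erase hc.1 hν
  intro x h1 h2
  rcases Nat.lt_or_ge x μ.card with hx | hx
  · have hxν : x ≤ ν.card := by omega
    have h := sw x h1 hxν
    split_ifs at h ⊢ <;> subst_vars <;>
      simp only [SYT.extend_cell_of_le _ _ _ h1 hxν, h] <;>
      rw [SYT.extend_cell_of_le _ _ _ (by omega) (by omega)]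
  · rw [le_antisymm h2 hx, if_neg (by omega), if_neg (by omega), SYT.extend_cell_card,
      SYT.extend_cell_card]

theorem posBetween_extend_iff {U : SYT ν} (hc : Maximal (· ∈ μ.cells) c)
    (hν : ν.cells = μ.cells.erase c) {d : ℕ} (ha : 1 ≤ a) (ha' : a ≤ ν.card) (hb : 1 ≤ b)
    (hb' : b ≤ ν.card) (hd : 1 ≤ d) (hd' : d ≤ ν.card) :
    posBetween (U.extend hc hν) a b d ↔ posBetween U a b d := by
  simp only [posBetween, SYT.extend_cell_of_le _ _ _ ha ha', SYT.extend_cell_of_le _ _ _ hb hb',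
    SYT.extend_cell_of_le _ _ _ hd hd']

theorem stdEdgeCore.extend {U U' : SYT ν} (hc : Maximal (· ∈ μ.cells) c)
    (hν : ν.cells = μ.cells.erase c) (h : stdEdgeCore ν i U U') :
    stdEdgeCore μ i (U.extend hc hν) (U'.extend hc hν) := by
  have hcard := YoungDiagram.card_add_one_of_cells_eq_erase hc.1 hν
  obtain ⟨hi1, hi2, ⟨pb, sw⟩ | ⟨pb, sw⟩⟩ := h
  · exact ⟨hi1, by omega, Or.inl ⟨(posBetween_extend_iff hc hν (by omega) (by omega) (by omega)
      (by omega) (by omega) (by omega)).2 pb, sw.extend hc hν (by omega) (by omega) (by omega)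
      (by omega)⟩⟩
  · exact ⟨hi1, by omega, Or.inr ⟨(posBetween_extend_iff hc hν (by omega) (by omega) (by omega)
      (by omega) (by omega) (by omega)).2 pb, sw.extend hc hν (by omega) (by omega) (by omega)
      (by omega)⟩⟩

end Edges

local notation "𝒢" μ:max => stdDEG (YoungDiagram.card μ) μ rfl

section AdjacentCorners

variable {μ : YoungDiagram} {c c'' : ℕ × ℕ}

theorem maximal_erase_erase_left (hc : Maximal (· ∈ μ.cells) c)
    (hc'' : Maximal (· ∈ μ.cells) c'') (hr : c.1 < c''.1) (hcol : c''.2 + 1 < c.2)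
    (hcons : ∀ e, Maximal (· ∈ μ.cells) e → ¬(c.1 < e.1 ∧ e.1 < c''.1)) :
    Maximal (· ∈ (μ.cells.erase c).erase c'') (c.1, c.2 - 1) := by
  simp only [Maximal, Finset.mem_erase, ne_eq, Prod.ext_iff]
  refine ⟨⟨by omega, by omega,
    μ.isLowerSet (show (c.1, c.2 - 1) ≤ c from ⟨le_rfl, Nat.sub_le _ _⟩) hc.1⟩, ?_⟩
  rintro y ⟨hyc'', hyc, hy⟩ ⟨hle1, hle2⟩
  simp only at hle1 hle2
  rcases hle1.eq_or_lt with hrow | hrow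
  · have : ¬c.2 ≤ y.2 := fun h => hyc (Prod.ext_iff.1 (hc.eq_of_le hy ⟨hrow.le, h⟩).symm)
    exact ⟨hrow.ge, by simp only; omega⟩
  · obtain ⟨e, hye, he⟩ := μ.cells.exists_le_maximal hy
    have := hcons e he
    rcases lt_trichotomy e.1 c''.1 with h | h | h
    · exact absurd ⟨hrow.trans_le hye.1, h⟩ this
    · have := congrArg Prod.snd (he.eq_of_fst_eq hc'' h)
      have := hye.2
      omega
    · have := hc''.snd_lt_of_fst_lt he.1 h
      have := hye.2
      omega

theorem maximal_erase_erase_above (hc : Maximal (· ∈ μ.cells) c)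
    (hc'' : Maximal (· ∈ μ.cells) c'') (hr : c.1 < c''.1) (hcol : c.2 = c''.2 + 1) :
    Maximal (· ∈ (μ.cells.erase c).erase c'') (c''.1 - 1, c''.2) := by
  simp only [Maximal, Finset.mem_erase, ne_eq, Prod.ext_iff]
  refine ⟨⟨by omega, by omega,
    μ.isLowerSet (show (c''.1 - 1, c''.2) ≤ c'' from ⟨Nat.sub_le _ _, le_rfl⟩) hc''.1⟩, ?_⟩
  rintro y ⟨hyc'', hyc, hy⟩ ⟨hle1, hle2⟩
  simp only at hle1 hle2
  have h2 : ¬c.2 ≤ y.2 := fun h => hyc (Prod.ext_iff.1 (hc.eq_of_le hy ⟨by omega, h⟩).symm)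
  have h1 : ¬c''.1 ≤ y.1 := fun h => hyc'' (Prod.ext_iff.1 (hc''.eq_of_le hy ⟨h, hle2⟩).symm)
  exact ⟨by simp only; omega, by simp only; omega⟩


theorem exists_maximal_cellContent_between (hc : Maximal (· ∈ μ.cells) c)
    (hc'' : Maximal (· ∈ μ.cells) c'') (hr : c.1 < c''.1)
    (hcons : ∀ e, Maximal (· ∈ μ.cells) e → ¬(c.1 < e.1 ∧ e.1 < c''.1)) :
    ∃ d, Maximal (· ∈ (μ.cells.erase c).erase c'') d ∧
      cellContent c'' < cellContent d ∧ cellContent d < cellContent c := by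
  have hcol := hc.snd_lt_of_fst_lt hc''.1 hr
  rcases (Nat.succ_le_of_lt hcol).lt_or_eq with h | h
  · exact ⟨_, maximal_erase_erase_left hc hc'' hr h hcons, by simp only [cellContent]; omega,
      by simp only [cellContent]; omega⟩
  · exact ⟨_, maximal_erase_erase_above hc hc'' hr h.symm, by simp only [cellContent]; omega,
      by simp only [cellContent]; omega⟩

theorem stdEdgeCore_of_swap_last {T U : SYT μ} (h3 : 2 < μ.card)
    (hpb : posBetween T (μ.card - 1) (μ.card - 2) μ.card)
    (hlast : U.cell μ.card = T.cell (μ.card - 1)) (hsub : U.cell (μ.card - 1) = T.cell μ.card)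
    (hlow : ∀ x, 1 ≤ x → x ≤ μ.card - 2 → U.cell x = T.cell x) :
    stdEdgeCore μ (μ.card - 1) T U := by
  refine ⟨by omega, by omega, Or.inr ⟨?_, fun x h1 h2 => ?_⟩⟩
  · rwa [show μ.card - 1 - 1 = μ.card - 2 by omega, Nat.sub_add_cancel (by omega)]
  · rw [Nat.sub_add_cancel (by omega : 1 ≤ μ.card)]
    split_ifs with ha hb
    · rw [ha, hsub]
    · rw [hb, hlast]
    · exact hlow x h1 (by omega)

theorem exists_stdEdge_of_adjacent_corners (hc : Maximal (· ∈ μ.cells) c)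
    (hc'' : Maximal (· ∈ μ.cells) c'') (hr : c.1 < c''.1)
    (hcons : ∀ e, Maximal (· ∈ μ.cells) e → ¬(c.1 < e.1 ∧ e.1 < c''.1)) :
    ∃ T U : SYT μ, T.cell μ.card = c ∧ U.cell μ.card = c'' ∧
      (𝒢 μ).edge (μ.card - 1) T U := by
  obtain ⟨d, hd, hd1, hd2⟩ := exists_maximal_cellContent_between hc hc'' hr hcons
  have hne : c ≠ c'' := fun h => hr.ne (congrArg Prod.fst h)
  obtain ⟨ν₁, hν₁⟩ := μ.exists_cells_eq_erase hc
  obtain ⟨ν₁', hν₁'⟩ := μ.exists_cells_eq_erase hc''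
  have hc''₁ : Maximal (· ∈ ν₁.cells) c'' := hν₁ ▸ hc''.finset_erase hne.symm
  have hc₁ : Maximal (· ∈ ν₁'.cells) c := hν₁' ▸ hc.finset_erase hne
  obtain ⟨ν₂, hν₂⟩ := ν₁.exists_cells_eq_erase hc''₁
  have hν₂' : ν₂.cells = ν₁'.cells.erase c := by rw [hν₂, hν₁, hν₁', Finset.erase_right_comm]
  have hd₂ : Maximal (· ∈ ν₂.cells) d := by rwa [hν₂, hν₁]
  obtain ⟨Y, hY⟩ := SYT.exists_cell_card_eq hd₂
  have hcard₁ := YoungDiagram.card_add_one_of_cells_eq_erase hc.1 hν₁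
  have hcard₁' := YoungDiagram.card_add_one_of_cells_eq_erase hc''.1 hν₁'
  have hcard₂ := YoungDiagram.card_add_one_of_cells_eq_erase hc''₁.1 hν₂
  have hpos₂ : 0 < ν₂.card := Finset.card_pos.2 ⟨d, hd₂.1⟩
  set T := (Y.extend hc''₁ hν₂).extend hc hν₁
  set U := (Y.extend hc₁ hν₂').extend hc'' hν₁'
  have hT : ∀ x, 1 ≤ x → x ≤ ν₂.card → T.cell x = Y.cell x := fun x h1 h2 => by
    rw [SYT.extend_cell_of_le _ _ _ h1 (by omega), SYT.extend_cell_of_le _ _ _ h1 h2]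
  have hU : ∀ x, 1 ≤ x → x ≤ ν₂.card → U.cell x = Y.cell x := fun x h1 h2 => by
    rw [SYT.extend_cell_of_le _ _ _ h1 (by omega), SYT.extend_cell_of_le _ _ _ h1 (by omega)]
  have hT₁ : T.cell (μ.card - 1) = c'' := by
    rw [show μ.card - 1 = ν₁.card by omega, SYT.extend_cell_of_le _ _ _ (by omega) le_rfl,
      SYT.extend_cell_card]
  have hU₁ : U.cell (μ.card - 1) = c := by
    rw [show μ.card - 1 = ν₁'.card by omega, SYT.extend_cell_of_le _ _ _ (by omega) le_rfl,
      SYT.extend_cell_card]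
  have hTtop : T.cell μ.card = c := SYT.extend_cell_card _ _ _
  have hUtop : U.cell μ.card = c'' := SYT.extend_cell_card _ _ _
  refine ⟨T, U, hTtop, hUtop, fun h => hne (hTtop.symm.trans (h ▸ hUtop)), Or.inl ?_⟩
  refine stdEdgeCore_of_swap_last (by omega) ?_ (hUtop.trans hT₁.symm) (hU₁.trans hTtop.symm)
    fun x h1 h2 => (hU x h1 (by omega)).trans (hT x h1 (by omega)).symm
  rw [posBetween, hT₁, hTtop, show μ.card - 2 = ν₂.card by omega, hT _ (by omega) le_rfl, hY]
  exact Or.inl ⟨Or.inl hd1, Or.inl hd2⟩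

end AdjacentCorners

theorem SCG.Reach.symm {V : Type} {n N : ℕ} {G : SCG V n N} {v w : V} (h : G.Reach v w) :
    G.Reach w v := by
  induction h with
  | refl => exact .refl
  | tail _ hbc ih =>
    obtain ⟨i, hi⟩ := hbc
    exact ih.head ⟨i, G.edge_symm i _ _ hi⟩

section Connected

variable {μ ν : YoungDiagram} {c : ℕ × ℕ}

theorem SCG.Reach.extend {U U' : SYT ν} (hc : Maximal (· ∈ μ.cells) c)
    (hν : ν.cells = μ.cells.erase c) (h : (𝒢 ν).Reach U U') :
    (𝒢 μ).Reach (U.extend hc hν) (U'.extend hc hν) :=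
  Relation.ReflTransGen.lift (SYT.extend hc hν) (fun _ _ ⟨i, hne, hAB⟩ =>
    ⟨i, (SYT.extend_injective hc hν).ne hne, hAB.imp (·.extend hc hν) (·.extend hc hν)⟩) _ _ h

theorem stdDEG_reach_of_cell_card_eq
    (ih : ∀ ν : YoungDiagram, ν.card + 1 = μ.card → ∀ U U' : SYT ν, (𝒢 ν).Reach U U')
    (h0 : 0 < μ.card) {T T' : SYT μ} (h : T.cell μ.card = T'.cell μ.card) :
    (𝒢 μ).Reach T T' := by
  obtain ⟨ν, hν⟩ := μ.exists_cells_eq_erase (T.maximal_cell_card h0)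
  obtain ⟨U, hU⟩ := T.exists_extend_eq (T.maximal_cell_card h0) hν rfl
  obtain ⟨U', hU'⟩ := T'.exists_extend_eq (T.maximal_cell_card h0) hν h.symm
  rw [← hU, ← hU']
  exact (ih ν (YoungDiagram.card_add_one_of_cells_eq_erase (T.cell_mem h0 le_rfl) hν) U U').extend
    _ _

theorem exists_stdDEG_reach_cell_card_fst_le
    (hsame : ∀ T T' : SYT μ, T.cell μ.card = T'.cell μ.card → (𝒢 μ).Reach T T')
    (h0 : 0 < μ.card) (T : SYT μ) :
    ∃ T', (𝒢 μ).Reach T T' ∧ ∀ e, Maximal (· ∈ μ.cells) e → (T'.cell μ.card).1 ≤ e.1 := by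
  induction hr : (T.cell μ.card).1 using Nat.strong_induction_on generalizing T with
  | _ r ih =>
  by_cases hmin : ∀ e, Maximal (· ∈ μ.cells) e → r ≤ e.1
  · exact ⟨T, .refl, hr ▸ hmin⟩
  push Not at hmin
  obtain ⟨e, he, her⟩ := hmin
  obtain ⟨c'', hc''mem, hmax⟩ :=
    (μ.cells.filter fun x => Maximal (· ∈ μ.cells) x ∧ x.1 < r).exists_max_image Prod.fst
      ⟨e, Finset.mem_filter.2 ⟨he.1, he, her⟩⟩
  obtain ⟨-, hc'', hc''r⟩ := Finset.mem_filter.1 hc''mem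
  obtain ⟨T₀, U₀, hT₀, hU₀, hedge⟩ :=
    exists_stdEdge_of_adjacent_corners hc'' (T.maximal_cell_card h0) (hr ▸ hc''r)
      fun e he ⟨h1, h2⟩ => (hmax e (Finset.mem_filter.2 ⟨he.1, he, hr ▸ h2⟩)).not_gt h1
  obtain ⟨T', hT', hmin'⟩ := ih c''.1 hc''r T₀ (by rw [hT₀])
  exact ⟨T', ((hsame T U₀ hU₀.symm).tail ⟨_, (𝒢 μ).edge_symm _ _ _ hedge⟩).trans hT', hmin'⟩

theorem stdDEG_reach_of_card_eq (n : ℕ) :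
    ∀ μ : YoungDiagram, μ.card = n → ∀ T U : SYT μ, (𝒢 μ).Reach T U := by
  induction n with
  | zero =>
    intro μ h T U
    rw [SYT.ext_cell (T := T) (U := U) fun a h1 h2 => by omega]
    exact .refl
  | succ m ih =>
    intro μ h T U
    have hsame : ∀ T T' : SYT μ, T.cell μ.card = T'.cell μ.card → (𝒢 μ).Reach T T' :=
      fun T T' => stdDEG_reach_of_cell_card_eq (fun ν hν => ih ν (by omega)) (by omega)
    obtain ⟨T', hT, hT'⟩ := exists_stdDEG_reach_cell_card_fst_le hsame (by omega) T
    obtain ⟨U', hU, hU'⟩ := exists_stdDEG_reach_cell_card_fst_le hsame (by omega) U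
    have hcT' := T'.maximal_cell_card (by omega)
    have hcU' := U'.maximal_cell_card (by omega)
    have htop := hcT'.eq_of_fst_eq hcU' ((hT' _ hcU').antisymm (hU' _ hcT'))
    exact (hT.trans (hsame T' U' htop)).trans hU.symm

theorem stdDEG_reach {n : ℕ} (h : μ.card = n) (T U : SYT μ) : (stdDEG n μ h).Reach T U := by
  subst h
  exact stdDEG_reach_of_card_eq _ μ rfl T U

end Connected

namespace SCG

variable {V W : Type} {n N : ℕ} {G : SCG V n N} {H : SCG W n N} {φ : V → W}

theorem IsMorphism.exists_edge_map_eq (hN : n ≤ N) (hG : G.Ax1) (hφ : IsMorphism G H φ)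
    (hsgn : ∀ i T U, H.edge i T U → H.sgn T (i - 1) = -H.sgn T i)
    (huniq : ∀ i T U U', H.edge i T U → H.edge i T U' → U = U')
    {i : ℕ} {T U : W} (hTU : H.edge i T U) {v : V} (hv : φ v = T) :
    ∃ x, φ x = U ∧ G.edge i v x ∧ ∀ y, G.edge i v y → y = x := by
  obtain ⟨hi1, hin⟩ := H.edge_supp i T U hTU
  have hadm : G.sgn v (i - 1) = -G.sgn v i := by
    rw [← hφ.1 v (i - 1) (by omega) (by omega), ← hφ.1 v i (by omega) (by omega), hv]
    exact hsgn i T U hTU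
  obtain ⟨x, hx, hxuniq⟩ := (hG i hi1 hin v).1 hadm
  exact ⟨x, (huniq i T U (φ x) hTU (hv ▸ hφ.2 i v x hx)).symm, hx, hxuniq⟩

theorem IsMorphism.ncard_fiber_eq_of_edge (hN : n ≤ N) (hG : G.Ax1) (hφ : IsMorphism G H φ)
    (hsgn : ∀ i T U, H.edge i T U → H.sgn T (i - 1) = -H.sgn T i)
    (huniq : ∀ i T U U', H.edge i T U → H.edge i T U' → U = U')
    {i : ℕ} {T U : W} (hTU : H.edge i T U) : (φ ⁻¹' {T}).ncard = (φ ⁻¹' {U}).ncard := by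
  choose! f hfU hfe hfuniq using fun v (hv : φ v = T) =>
    hφ.exists_edge_map_eq hN hG hsgn huniq hTU hv
  choose! g hgT hge hguniq using fun v (hv : φ v = U) =>
    hφ.exists_edge_map_eq hN hG hsgn huniq (H.edge_symm _ _ _ hTU) hv
  refine Set.ncard_congr (fun v _ => f v) hfU (fun a b ha hb hab => ?_)
    (fun x hx => ⟨g x, hgT x hx, ?_⟩)
  · have hb' : G.edge i (f a) b := hab ▸ G.edge_symm _ _ _ (hfe b hb)
    exact (hguniq _ (hfU a ha) a (G.edge_symm _ _ _ (hfe a ha))).trans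
      (hguniq _ (hfU a ha) b hb').symm
  · exact (hfuniq _ (hgT x hx) x (G.edge_symm _ _ _ (hge x hx))).symm

end SCG

/-- Let `G` be a connected signed colored graph of type
`(n+1,n+1)` satisfying dual equivalence axioms 1 through 5, with every
connected component of the `(n,n)`-restriction isomorphic to a standard dual
equivalence graph, and let `φ` be a morphism from `G` to `G_λ`, `λ ⊢ n+1`.
Then the fibers of `φ` over the vertices of `G_λ` all have the same
cardinality. -/
theorem statement6 (n : ℕ) (V : Type) (G : SCG V (n + 1) (n + 1))
    (h1 : G.Ax1)
    (lam : YoungDiagram) (hcard : lam.card = n + 1) (φ : V → SYT lam)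
    (hφ : SCG.IsMorphism G (stdDEG (n + 1) lam hcard) φ) :
    ∀ T U : SYT lam, (φ ⁻¹' {T}).ncard = (φ ⁻¹' {U}).ncard := by
  intro T U
  induction stdDEG_reach hcard T U with
  | refl => rfl
  | tail _ hedge ih =>
    obtain ⟨i, hi⟩ := hedge
    exact ih.trans (hφ.ncard_fiber_eq_of_edge le_rfl h1 (fun _ _ _ => stdDEG_edge_sgn hcard)
      (fun _ _ _ _ => stdDEG_edge_unique hcard) hi)
end

section
/- Let μ be a k-tuple of skew shapes with n cells in total, and let c and D be the content vector and k-descent set corresponding to μ, so that the map sending a k-tuple of semi-standard tableaux of shapes μ to the pair (content reading word, shifted content vector) is a bijection from SSYT_k(μ) onto the set WRib_k(c,D) of k-ribbon words with content vector c and k-descent set D. Then G̃^{(k)}_μ(x;q) = Σ_{(w,c) ∈ WRib_k(c,D)} q^{inv_k(w,c)} x^w = Σ q^{inv_k(w,c)} Q_{σ(w)}(x), where the last sum is over the standard k-ribbon words (w,c) ∈ WRib_k(c,D) (those for which w is a permutation of {1,…,n}), x^w = x_1^{π_1}x_2^{π_2}⋯ when w has π_j letters equal to j, and σ(w)_i =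 +1 if i appears to the left of i+1 in w and −1 otherwise. -/
open scoped Classical

/-!
Cells adjacent in a row or in a column have shifted contents differing by exactly `k`, so the
`k`-descent set of a content reading word, which is the same for every tuple of tableaux and can
be read off from the filling of each cell by its row index, encodes precisely the row and column
inequalities. Hence reading along content diagonals is a bijection onto the positive words with
that `k`-descent set, and it carries weights and `k`-inversions along. Two consecutive letters of
equal shifted content lie on one diagonal of a skew shape, and the cell left of the later one and
the cell right of the earlier one witness the ribbon condition.

For the quasisymmetric expansion, standardization (rank the letters, breaking ties from left to
right) and destandardization along a weakly increasing sequence compatible with the descent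
signature are mutually inverse. Both keep every inversion between positions, and since `c` is
nondecreasing, `k`-descents, `k`-inversions and the ribbon condition depend only on those
inversions.
-/

open scoped Finset

lemma IsSkewShape.mem_of_le_of_le {S : Finset (ℕ × ℕ)} (hS : IsSkewShape S)
    {r s r' s' a b : ℕ} (h : (r, s) ∈ S) (h' : (r', s') ∈ S)
    (hra : r ≤ a) (har' : a ≤ r') (hsb : s ≤ b) (hbs' : b ≤ s') : (a, b) ∈ S := by
  obtain ⟨lam, nu, -, rfl⟩ := hS
  simp only [Finset.mem_sdiff, YoungDiagram.mem_cells] at *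
  exact ⟨lam.up_left_mem har' hbs' h'.1, fun hab => h.2 (nu.up_left_mem hra hsb hab)⟩

namespace SemistdOn

variable {S : Finset (ℕ × ℕ)} {T : ℕ × ℕ → ℕ}

lemma lt_of_lt_of_le (hS : IsSkewShape S) (hT : SemistdOn S T) {r s r' s' : ℕ}
    (h : (r, s) ∈ S) (h' : (r', s') ∈ S) (hr : r < r') (hs : s ≤ s') :
    T (r, s) < T (r', s') := by
  have hcorner : (r, s') ∈ S := hS.mem_of_le_of_le h h' le_rfl hr.le hs le_rfl
  exact (hT.2.2.1 r s s' h hcorner hs).trans_lt (hT.2.2.2 r r' s' hcorner h' hr)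

lemma le_of_le (hS : IsSkewShape S) (hT : SemistdOn S T) {r s r' s' : ℕ}
    (h : (r, s) ∈ S) (h' : (r', s') ∈ S) (hr : r ≤ r') (hs : s ≤ s') :
    T (r, s) ≤ T (r', s') := by
  rcases hr.eq_or_lt with rfl | hr
  · exact hT.2.2.1 r s s' h h' hs
  · exact (hT.lt_of_lt_of_le hS h h' hr hs).le

lemma of_adjacent (hS : IsSkewShape S) (hpos : ∀ x ∈ S, 1 ≤ T x)
    (hzero : ∀ x, x ∉ S → T x = 0)
    (hrow : ∀ r s, (r, s) ∈ S → (r, s + 1) ∈ S → T (r, s) ≤ T (r, s + 1))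
    (hcol : ∀ r s, (r, s) ∈ S → (r + 1, s) ∈ S → T (r, s) < T (r + 1, s)) :
    SemistdOn S T := by
  refine ⟨hpos, hzero, fun r s₁ s₂ h₁ h₂ hs => ?_, fun r₁ r₂ s h₁ h₂ hr => ?_⟩
  · induction s₂, hs using Nat.le_induction with
    | base => exact le_rfl
    | succ m hm ih =>
      have hm' : (r, m) ∈ S := hS.mem_of_le_of_le h₁ h₂ le_rfl le_rfl hm (by omega)
      exact (ih hm').trans (hrow r m hm' h₂)
  · induction r₂, hr using Nat.le_induction with
    | base => exact hcol r₁ s h₁ h₂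
    | succ m hm ih =>
      have hm' : (m, s) ∈ S := hS.mem_of_le_of_le h₁ h₂ (by omega) (by omega) le_rfl le_rfl
      exact (ih hm').trans (hcol m s hm' h₂)

end SemistdOn

lemma eq_of_shiftedContent_eq {k : ℕ} {i j : Fin k} {x y : ℕ × ℕ}
    (h : shiftedContent k (i, x) = shiftedContent k (j, y)) :
    i = j ∧ cellContent x = cellContent y := by
  have hk : (0 : ℤ) < k := by exact_mod_cast i.pos
  have hmod : ∀ (a : ℤ) (l : Fin k), ((k : ℤ) * a + l) % k = l := fun a l => by
    rw [add_comm, Int.add_mul_emod_self_left]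
    exact Int.emod_eq_of_lt (by positivity) (by exact_mod_cast l.isLt)
  have hij : ((i : ℕ) : ℤ) = j := by
    simpa only [shiftedContent, hmod] using congrArg (· % (k : ℤ)) h
  refine ⟨Fin.ext (by exact_mod_cast hij), mul_left_cancel₀ hk.ne' ?_⟩
  simpa only [shiftedContent, hij, add_left_inj] using h

lemma shiftedContent_succ_col (k : ℕ) (i : Fin k) (r s : ℕ) :
    shiftedContent k (i, r, s + 1) = shiftedContent k (i, r, s) + k := by
  simp only [shiftedContent, cellContent]; push_cast; ring

lemma shiftedContent_succ_row (k : ℕ) (i : Fin k) (r s : ℕ) :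
    shiftedContent k (i, r + 1, s) + k = shiftedContent k (i, r, s) := by
  simp only [shiftedContent, cellContent]; push_cast; ring

section CellEnum

variable {k n : ℕ} {S : Fin k → Finset (ℕ × ℕ)} {e : ℕ → Fin k × ℕ × ℕ} {c : ℕ → ℤ}

namespace IsCellEnum

lemma monotoneOn (he : IsCellEnum k n S e)
    (hc : ∀ p ∈ Set.Icc 1 n, c p = shiftedContent k (e p)) : MonotoneOn c (Set.Icc 1 n) := by
  intro p hp q hq hpq
  rw [hc p hp, hc q hq]
  rcases hpq.eq_or_lt with rfl | hlt
  · exact le_rfl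
  · rcases he.2 p q hp hq hlt with h | h
    exacts [h.le, h.1.le]

lemma exists_eq (he : IsCellEnum k n S e) {i : Fin k} {x : ℕ × ℕ} (hx : x ∈ S i) :
    ∃ p ∈ Set.Icc 1 n, e p = (i, x) :=
  he.1.surjOn (show (i, x) ∈ {ix : Fin k × ℕ × ℕ | ix.2 ∈ S ix.1} from hx)

lemma invFunOn_apply (he : IsCellEnum k n S e) {p : ℕ} (hp : p ∈ Set.Icc 1 n) :
    Function.invFunOn e (Set.Icc 1 n) ((e p).1, (e p).2) = p :=
  he.1.invOn_invFunOn.1 hp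

end IsCellEnum

lemma readWord_of_mem {T : Fin k → ℕ × ℕ → ℕ} {p : ℕ} (hp : p ∈ Set.Icc 1 n) :
    readWord n e T p = T (e p).1 (e p).2 := if_pos hp

lemma isPosWord_readWord (he : IsCellEnum k n S e) {T : Fin k → ℕ × ℕ → ℕ}
    (hT : SemistdTuple S T) : IsPosWord n (readWord n e T) :=
  ⟨fun p hp => by rw [readWord_of_mem hp]; exact (hT _).1 _ (he.1.mapsTo hp), fun _ hp => if_neg hp⟩

lemma readWord_injOn (he : IsCellEnum k n S e) :
    Set.InjOn (readWord n e) {T : Fin k → ℕ × ℕ → ℕ | SemistdTuple S T} := by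
  intro T hT T' hT' h
  funext i x
  by_cases hx : x ∈ S i
  · obtain ⟨p, hp, hpx⟩ := he.exists_eq hx
    simpa only [readWord_of_mem hp, hpx] using congrFun h p
  · rw [(hT i).2.1 x hx, (hT' i).2.1 x hx]

lemma wordWeight_readWord (he : IsCellEnum k n S e) (T : Fin k → ℕ × ℕ → ℕ) :
    wordWeight n (readWord n e T) = tupleWeight S T := by
  rw [wordWeight, tupleWeight, Finset.sum_sigma']
  refine Finset.sum_nbij (fun p => ⟨(e p).1, (e p).2⟩) (fun p hp => ?_) (fun p hp q hq h => ?_)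
    (fun ⟨i, x⟩ hx => ?_) (fun p hp => by rw [readWord_of_mem (Finset.mem_Icc.1 hp)])
  · simpa using he.1.mapsTo (Finset.mem_Icc.1 hp)
  · simp only [Sigma.mk.inj_iff, heq_eq_eq] at h
    exact he.1.injOn (Finset.mem_Icc.1 hp) (Finset.mem_Icc.1 hq) (Prod.ext h.1 h.2)
  · have hx : x ∈ S i := by simpa using hx
    obtain ⟨p, hp, hpx⟩ := he.exists_eq hx
    exact ⟨p, Finset.mem_Icc.2 hp, by simp [hpx]⟩

lemma invK_readWord (he : IsCellEnum k n S e)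
    (hc : ∀ p ∈ Set.Icc 1 n, c p = shiftedContent k (e p)) (T : Fin k → ℕ × ℕ → ℕ) :
    invK k n (readWord n e T) c = invkTuple k S T := by
  have hinj : Set.InjOn (fun pq : ℕ × ℕ => (e pq.1, e pq.2)) (InvK k n (readWord n e T) c) :=
    fun x hx y hy hxy => Prod.ext (he.1.injOn hx.1 hy.1 (Prod.ext_iff.1 hxy).1)
      (he.1.injOn hx.2.1 hy.2.1 (Prod.ext_iff.1 hxy).2)
  rw [invK, invkTuple, ← hinj.ncard_image]
  congr 1
  ext ⟨a, b⟩
  constructor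
  · rintro ⟨⟨p, q⟩, ⟨hp, hq, hw, h0, hk⟩, hpq⟩
    obtain ⟨rfl, rfl⟩ := Prod.mk.inj hpq
    rw [readWord_of_mem hp, readWord_of_mem hq] at hw
    rw [hc p hp, hc q hq] at h0 hk
    exact ⟨he.1.mapsTo hp, he.1.mapsTo hq, h0, hk, hw⟩
  · rintro ⟨hx, hy, h0, hk, hT⟩
    obtain ⟨p, hp, rfl⟩ := he.1.surjOn hx
    obtain ⟨q, hq, rfl⟩ := he.1.surjOn hy
    refine ⟨(p, q), ⟨hp, hq, ?_, ?_, ?_⟩, rfl⟩ <;>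
      simpa only [readWord_of_mem hp, readWord_of_mem hq, hc p hp, hc q hq]

lemma isRibbonWord_readWord (hS : ∀ i, IsSkewShape (S i)) (he : IsCellEnum k n S e)
    (hc : ∀ p ∈ Set.Icc 1 n, c p = shiftedContent k (e p)) {T : Fin k → ℕ × ℕ → ℕ}
    (hT : SemistdTuple S T) : IsRibbonWord k n (readWord n e T) c := by
  intro p hp1 hpn hcp
  have hp : p ∈ Set.Icc 1 n := ⟨hp1, by omega⟩
  have hp' : p + 1 ∈ Set.Icc 1 n := ⟨by omega, hpn⟩
  rcases hx : e p with ⟨i, r, s⟩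
  rcases hy : e (p + 1) with ⟨j, r', s'⟩
  have hsc : shiftedContent k (i, r, s) = shiftedContent k (j, r', s') := by
    rw [← hx, ← hy, ← hc p hp, ← hc _ hp', hcp]
  obtain ⟨rfl, hcont⟩ := eq_of_shiftedContent_eq hsc
  have hss' : s < s' := by
    rcases he.2 p (p + 1) hp hp' (by omega) with h | h
    · rw [hx, hy, hsc] at h; exact absurd h (lt_irrefl _)
    · rw [hx, hy] at h; exact h.2
  have hrr' : r < r' := by simp only [cellContent] at hcont; omega
  have hmem : (r, s) ∈ S i := by simpa [hx] using he.1.mapsTo hp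
  have hmem' : (r', s') ∈ S i := by simpa [hy] using he.1.mapsTo hp'
  have hleft : (r', s' - 1) ∈ S i :=
    (hS i).mem_of_le_of_le hmem hmem' hrr'.le le_rfl (by omega) (by omega)
  have hright : (r, s + 1) ∈ S i :=
    (hS i).mem_of_le_of_le hmem hmem' le_rfl hrr'.le (by omega) (by omega)
  have hsc_left : shiftedContent k (i, r', s' - 1) + k = shiftedContent k (i, r', s') := by
    rw [← shiftedContent_succ_col, Nat.sub_add_cancel (by omega : 1 ≤ s')]
  obtain ⟨h, hh, hhe⟩ := he.exists_eq hleft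
  obtain ⟨l, hl, hle⟩ := he.exists_eq hright
  rw [readWord_of_mem hp, readWord_of_mem hp', hc p hp, hx, hy]
  refine ⟨⟨h, hh, ?_, ?_, ?_⟩, ⟨l, hl, ?_, ?_, ?_⟩⟩ <;>
    simp only [readWord_of_mem hh, readWord_of_mem hl, hc h hh, hc l hl, hhe, hle]
  · rw [hsc, ← hsc_left]; ring
  · exact (hT i).lt_of_lt_of_le (hS i) hmem hleft hrr' (by omega)
  · exact (hT i).le_of_le (hS i) hleft hmem' le_rfl (by omega)
  · exact shiftedContent_succ_col k i r s
  · exact (hT i).le_of_le (hS i) hmem hright le_rfl (by omega)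
  · exact (hT i).lt_of_lt_of_le (hS i) hright hmem' hrr' (by omega)

def rowFilling (S : Fin k → Finset (ℕ × ℕ)) : Fin k → ℕ × ℕ → ℕ :=
  fun i x => if x ∈ S i then x.1 + 1 else 0

lemma semistdTuple_rowFilling : SemistdTuple S (rowFilling S) := fun i =>
  ⟨fun x hx => by simp [rowFilling, hx], fun x hx => by simp [rowFilling, hx],
    fun r s₁ s₂ h₁ h₂ _ => by simp [rowFilling, h₁, h₂],
    fun r₁ r₂ s h₁ h₂ h => by simp [rowFilling, h₁, h₂, h]⟩

noncomputable def wordFilling (n : ℕ) (S : Fin k → Finset (ℕ × ℕ)) (e : ℕ → Fin k × ℕ × ℕ)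
    (u : ℕ → ℕ) : Fin k → ℕ × ℕ → ℕ :=
  fun i x => if x ∈ S i then u (Function.invFunOn e (Set.Icc 1 n) (i, x)) else 0

lemma readWord_wordFilling (he : IsCellEnum k n S e) {u : ℕ → ℕ} (hu : IsPosWord n u) :
    readWord n e (wordFilling n S e u) = u := by
  funext p
  by_cases hp : p ∈ Set.Icc 1 n
  · rw [readWord_of_mem hp, wordFilling, if_pos (show (e p).2 ∈ S (e p).1 from he.1.mapsTo hp),
      he.invFunOn_apply hp]
  · rw [hu.2 p hp]
    exact if_neg hp

lemma semistdTuple_wordFilling (hS : ∀ i, IsSkewShape (S i)) (he : IsCellEnum k n S e)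
    (hc : ∀ p ∈ Set.Icc 1 n, c p = shiftedContent k (e p)) {u : ℕ → ℕ} (hu : IsPosWord n u)
    (hD : DesK k n u c = DesK k n (readWord n e (rowFilling S)) c) :
    SemistdTuple S (wordFilling n S e u) := by
  intro i
  have hcell {x : ℕ × ℕ} (hx : x ∈ S i) : ∃ p ∈ Set.Icc 1 n, wordFilling n S e u i x = u p ∧
      readWord n e (rowFilling S) p = x.1 + 1 ∧ c p = shiftedContent k (i, x) := by
    obtain ⟨p, hp, hpx⟩ := he.exists_eq hx
    refine ⟨p, hp, ?_, ?_, ?_⟩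
    · rw [wordFilling, if_pos hx, ← hpx, he.invFunOn_apply hp]
    · rw [readWord_of_mem hp, hpx]; exact if_pos hx
    · rw [hc p hp, hpx]
  refine SemistdOn.of_adjacent (hS i) (fun x hx => ?_) (fun x hx => if_neg hx)
    (fun r s h h' => ?_) (fun r s h h' => ?_)
  · obtain ⟨p, hp, hu', -⟩ := hcell hx
    rw [hu']
    exact hu.1 p hp
  · obtain ⟨p, hp, hup, hrp, hcp⟩ := hcell h
    obtain ⟨q, hq, huq, hrq, hcq⟩ := hcell h'
    rw [hup, huq]
    -- a strict decrease along a row would be a `k`-descent, which the row filling lacks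
    by_contra hlt
    have hdes : (p, q) ∈ DesK k n u c :=
      ⟨hp, hq, not_le.1 hlt, by rw [hcp, hcq, shiftedContent_succ_col]; ring⟩
    rw [hD] at hdes
    exact absurd hdes.2.2.1 (by rw [hrp, hrq]; exact lt_irrefl _)
  · obtain ⟨p, hp, hup, hrp, hcp⟩ := hcell h
    obtain ⟨q, hq, huq, hrq, hcq⟩ := hcell h'
    rw [hup, huq]
    -- the row filling has a `k`-descent down each column
    have hdes : (q, p) ∈ DesK k n (readWord n e (rowFilling S)) c :=
      ⟨hq, hp, by rw [hrp, hrq]; omega, by rw [hcp, hcq, ← shiftedContent_succ_row]; ring⟩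
    rw [← hD] at hdes
    exact hdes.2.2.1

theorem LLTpoly_eq_ribbonWordGF {D : Set (ℕ × ℕ)} (hS : ∀ i, IsSkewShape (S i))
    (he : IsCellEnum k n S e)
    (hc : ∀ p ∈ Set.Icc 1 n, c p = shiftedContent k (e p))
    (hD : ∀ T : Fin k → ℕ × ℕ → ℕ, SemistdTuple S T → DesK k n (readWord n e T) c = D) :
    LLTpoly k S = ribbonWordGF k n c D := by
  funext d
  refine finsum_eq_of_bijective (fun T => ⟨readWord n e T.1, isPosWord_readWord he T.2.1,
      isRibbonWord_readWord hS he hc T.2.1, hD T.1 T.2.1,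
      (wordWeight_readWord he T.1).trans T.2.2⟩)
    ⟨fun T T' h => Subtype.ext (readWord_injOn he T.2.1 T'.2.1 (congrArg Subtype.val h)), ?_⟩
    fun T => by rw [invK_readWord he hc]
  rintro ⟨u, hu, -, hDu, hwt⟩
  have hread := readWord_wordFilling he hu
  have hsemistd := semistdTuple_wordFilling hS he hc hu
    (hDu.trans (hD _ semistdTuple_rowFilling).symm)
  exact ⟨⟨wordFilling n S e u, hsemistd, by rw [← wordWeight_readWord he, hread, hwt]⟩,
    Subtype.ext hread⟩

end CellEnum

lemma Finset.card_filter_le_lt_card_filter_le_iff {α β : Type*} [LinearOrder β] {s : Finset α}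
    {g : α → β} {a b : α} (hb : b ∈ s) :
    #{x ∈ s | g x ≤ g a} < #{x ∈ s | g x ≤ g b} ↔ g a < g b := by
  constructor
  · intro h
    by_contra! hba
    refine (Finset.card_le_card fun x hx => ?_).not_gt h
    simp only [Finset.mem_filter] at hx ⊢
    exact ⟨hx.1, hx.2.trans hba⟩
  · intro hab
    refine Finset.card_lt_card ⟨fun x hx => ?_, fun hsub => ?_⟩
    · simp only [Finset.mem_filter] at hx ⊢
      exact ⟨hx.1, hx.2.trans hab.le⟩
    · exact (Finset.mem_filter.1 (hsub (Finset.mem_filter.2 ⟨hb, le_rfl⟩))).2.not_gt hab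

namespace IsStdWord

variable {n : ℕ} {w : ℕ → ℕ}

lemma posOf_apply (hw : IsStdWord n w) {p : ℕ} (hp : p ∈ Set.Icc 1 n) : posOf n w (w p) = p := by
  have hmem := Nat.sInf_mem (s := {q | q ∈ Set.Icc 1 n ∧ w q = w p}) ⟨p, hp, rfl⟩
  exact hw.1.injOn hmem.1 hp hmem.2

lemma posOf_mem (hw : IsStdWord n w) {a : ℕ} (ha : a ∈ Set.Icc 1 n) :
    posOf n w a ∈ Set.Icc 1 n := by
  obtain ⟨p, hp, rfl⟩ := hw.1.surjOn ha
  rwa [hw.posOf_apply hp]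

lemma apply_posOf (hw : IsStdWord n w) {a : ℕ} (ha : a ∈ Set.Icc 1 n) : w (posOf n w a) = a := by
  obtain ⟨p, hp, rfl⟩ := hw.1.surjOn ha
  rw [hw.posOf_apply hp]

lemma posOf_lt_posOf_succ (hw : IsStdWord n w) {j : ℕ} (hj : wordSgn n w j = 1) :
    posOf n w j < posOf n w (j + 1) := by
  have hleft : leftOf n w j (j + 1) := by
    by_contra h
    simp [wordSgn, h] at hj
  obtain ⟨p, q, hp, hq, hpq, rfl, hwq⟩ := hleft
  rwa [hw.posOf_apply hp, ← hwq, hw.posOf_apply hq]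

lemma eq_card_filter_le (hw : IsStdWord n w) {p : ℕ} (hp : p ∈ Set.Icc 1 n) :
    w p = #{q ∈ Finset.Icc 1 n | w q ≤ w p} := by
  have hwp := hw.1.mapsTo hp
  calc w p = #(Finset.Icc 1 (w p)) := by simp
    _ = #{q ∈ Finset.Icc 1 n | w q ≤ w p} := by
      refine (Finset.card_nbij w (fun q hq => ?_) (fun q hq q' hq' h => ?_) fun a ha => ?_).symm
      · simp only [Finset.coe_filter, Finset.coe_Icc, Finset.mem_Icc, Set.mem_ofPred_eq] at hq ⊢
        exact ⟨(hw.1.mapsTo hq.1).1, hq.2⟩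
      · simp only [Finset.coe_filter, Finset.mem_Icc, Set.mem_ofPred_eq] at hq hq'
        exact hw.1.injOn hq.1 hq'.1 h
      · simp only [Finset.coe_filter, Finset.coe_Icc, Finset.mem_Icc] at ha ⊢
        have ha' : a ∈ Set.Icc 1 n := ⟨ha.1, ha.2.trans hwp.2⟩
        exact ⟨posOf n w a, ⟨hw.posOf_mem ha', by rw [hw.apply_posOf ha']; exact ha.2⟩,
          hw.apply_posOf ha'⟩

end IsStdWord

section Standardization

variable {n : ℕ} {u w : ℕ → ℕ}

noncomputable def standardize (n : ℕ) (u : ℕ → ℕ) : ℕ → ℕ := fun p =>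
  if p ∈ Set.Icc 1 n then #{q ∈ Finset.Icc 1 n | toLex (u q, q) ≤ toLex (u p, p)} else 0

lemma standardize_of_mem {p : ℕ} (hp : p ∈ Set.Icc 1 n) :
    standardize n u p = #{q ∈ Finset.Icc 1 n | toLex (u q, q) ≤ toLex (u p, p)} := if_pos hp

lemma standardize_lt_standardize_iff {p q : ℕ} (hp : p ∈ Set.Icc 1 n) (hq : q ∈ Set.Icc 1 n) :
    standardize n u p < standardize n u q ↔ toLex (u p, p) < toLex (u q, q) := by
  rw [standardize_of_mem hp, standardize_of_mem hq]
  exact Finset.card_filter_le_lt_card_filter_le_iff (Finset.mem_Icc.2 hq)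

lemma isStdWord_standardize (n : ℕ) (u : ℕ → ℕ) : IsStdWord n (standardize n u) := by
  have hmaps : Set.MapsTo (standardize n u) (Set.Icc 1 n) (Set.Icc 1 n) := by
    intro p hp
    rw [standardize_of_mem hp]
    refine ⟨Finset.card_pos.2 ⟨p, Finset.mem_filter.2 ⟨Finset.mem_Icc.2 hp, le_rfl⟩⟩, ?_⟩
    simpa using Finset.card_filter_le (Finset.Icc 1 n) _
  have hinj : Set.InjOn (standardize n u) (Set.Icc 1 n) := by
    intro p hp q hq h
    have hpq := (standardize_lt_standardize_iff (u := u) hp hq).not.1 h.not_lt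
    have hqp := (standardize_lt_standardize_iff (u := u) hq hp).not.1 h.symm.not_lt
    exact (Prod.ext_iff.1 (toLex.injective (le_antisymm (not_lt.1 hqp) (not_lt.1 hpq)))).2
  exact ⟨(Set.finite_Icc 1 n).injOn_iff_bijOn_of_mapsTo hmaps |>.1 hinj, fun p hp => if_neg hp⟩

lemma standardize_eq_of_lex_lt_iff (hw : IsStdWord n w)
    (h : ∀ p ∈ Set.Icc 1 n, ∀ q ∈ Set.Icc 1 n, toLex (u p, p) < toLex (u q, q) ↔ w p < w q) :
    standardize n u = w := by
  funext p
  by_cases hp : p ∈ Set.Icc 1 n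
  · rw [standardize_of_mem hp, hw.eq_card_filter_le hp]
    refine congrArg Finset.card (Finset.filter_congr fun q hq => ?_)
    rw [← not_lt, ← not_lt, h p hp q (Finset.mem_Icc.1 hq)]
  · rw [hw.2 p hp]
    exact if_neg hp

end Standardization

section Destandardization

variable {n : ℕ} {u w : ℕ → ℕ} {f : Fin n → ℕ}

def finExtend (n : ℕ) (f : Fin n → ℕ) (a : ℕ) : ℕ := if h : a < n then f ⟨a, h⟩ else 0

lemma finExtend_of_lt {a : ℕ} (h : a < n) : finExtend n f a = f ⟨a, h⟩ := dif_pos h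

/-- The condition `i_j = i_(j+1) → σ_j = +1` of Gessel's `Q_σ`, with `(i_1, …, i_n)` stored
in `f : Fin n → ℕ` from index `0`. -/
def SgnCompatible (n : ℕ) (s : ℕ → ℤ) (f : Fin n → ℕ) : Prop :=
  ∀ (j : ℕ) (hj : j < n), 1 ≤ j → f ⟨j - 1, by omega⟩ = f ⟨j, hj⟩ → s j = 1

def destandardize (n : ℕ) (w : ℕ → ℕ) (f : Fin n → ℕ) : ℕ → ℕ := fun p =>
  if p ∈ Set.Icc 1 n then finExtend n f (w p - 1) + 1 else 0

lemma destandardize_of_mem {p : ℕ} (hp : p ∈ Set.Icc 1 n) :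
    destandardize n w f p = finExtend n f (w p - 1) + 1 := if_pos hp

lemma isPosWord_destandardize : IsPosWord n (destandardize n w f) :=
  ⟨fun p hp => by rw [destandardize_of_mem hp]; omega, fun _ hp => if_neg hp⟩

lemma destandardize_posOf (hw : IsStdWord n w) (m : Fin n) :
    destandardize n w f (posOf n w (m + 1)) = f m + 1 := by
  have hm : (m : ℕ) + 1 ∈ Set.Icc 1 n := ⟨by omega, m.isLt⟩
  rw [destandardize_of_mem (hw.posOf_mem hm), hw.apply_posOf hm, Nat.add_sub_cancel,
    finExtend_of_lt m.isLt]

lemma wordWeight_destandardize (hw : IsStdWord n w) :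
    wordWeight n (destandardize n w f) = ∑ m, Finsupp.single (f m) 1 := by
  have hw1 {p : ℕ} (hp : p ∈ Finset.Icc 1 n) : w p - 1 < n := by
    have := hw.1.mapsTo (Finset.mem_Icc.1 hp); simp only [Set.mem_Icc] at this; omega
  refine Finset.sum_bij (fun p hp => ⟨w p - 1, hw1 hp⟩) (fun _ _ => Finset.mem_univ _)
    (fun p hp q hq h => ?_) (fun m _ => ?_) (fun p hp => ?_)
  · have hp' := hw.1.mapsTo (Finset.mem_Icc.1 hp)
    have hq' := hw.1.mapsTo (Finset.mem_Icc.1 hq)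
    simp only [Fin.mk.injEq, Set.mem_Icc] at h hp' hq'
    exact hw.1.injOn (Finset.mem_Icc.1 hp) (Finset.mem_Icc.1 hq) (by omega)
  · have hm : (m : ℕ) + 1 ∈ Set.Icc 1 n := ⟨by omega, m.isLt⟩
    exact ⟨posOf n w (m + 1), Finset.mem_Icc.2 (hw.posOf_mem hm),
      Fin.ext (by simp [hw.apply_posOf hm])⟩
  · rw [destandardize_of_mem (Finset.mem_Icc.1 hp), Nat.add_sub_cancel, finExtend_of_lt (hw1 hp)]

lemma strictMonoOn_toLex_posOf (hw : IsStdWord n w) (hf : Monotone f)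
    (hfs : SgnCompatible n (wordSgn n w) f) :
    StrictMonoOn (fun a => toLex (finExtend n f (a - 1), posOf n w a)) (Set.Icc 1 n) := by
  have hmono {a b : ℕ} (ha : 1 ≤ a) (hab : a ≤ b) (hb : b ≤ n) :
      finExtend n f (a - 1) ≤ finExtend n f (b - 1) := by
    rw [finExtend_of_lt (by omega), finExtend_of_lt (by omega)]
    exact hf (Fin.mk_le_mk.2 (by omega))
  rintro a ⟨ha, -⟩ b ⟨-, hb⟩ hab
  rcases (hmono ha hab.le hb).lt_or_eq with hlt | heq
  · exact Prod.Lex.toLex_lt_toLex.2 (Or.inl hlt)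
  refine Prod.Lex.toLex_lt_toLex.2 (Or.inr ⟨heq, ?_⟩)
  -- `f` is constant on the letters `a, …, b`, so each of them lies left of its successor
  have hstep {j : ℕ} (haj : a ≤ j) (hjb : j < b) : posOf n w j < posOf n w (j + 1) := by
    refine hw.posOf_lt_posOf_succ (hfs j (by omega) (by omega) ?_)
    have h₁ := hmono ha haj (by omega)
    have h₂ := hmono (a := j) (b := j + 1) (by omega) (by omega) (by omega)
    have h₃ := hmono (a := j + 1) (by omega) hjb hb
    rw [Nat.add_sub_cancel] at h₂ h₃
    rw [← finExtend_of_lt (f := f), ← finExtend_of_lt (f := f)]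
    omega
  have hchain {m : ℕ} (ham : a + 1 ≤ m) : m ≤ b → posOf n w a < posOf n w m := by
    induction m, ham using Nat.le_induction with
    | base => exact fun _ => hstep le_rfl hab
    | succ m ham ih => exact fun hmb => (ih (by omega)).trans (hstep (by omega) hmb)
  exact hchain hab le_rfl

lemma destandardize_lex_lt_iff (hw : IsStdWord n w) (hf : Monotone f)
    (hfs : SgnCompatible n (wordSgn n w) f) {p q : ℕ} (hp : p ∈ Set.Icc 1 n)
    (hq : q ∈ Set.Icc 1 n) :
    toLex (destandardize n w f p, p) < toLex (destandardize n w f q, q) ↔ w p < w q := by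
  have key := (strictMonoOn_toLex_posOf hw hf hfs).lt_iff_lt (hw.1.mapsTo hp) (hw.1.mapsTo hq)
  simp only [hw.posOf_apply hp, hw.posOf_apply hq, Prod.Lex.toLex_lt_toLex] at key ⊢
  rw [destandardize_of_mem hp, destandardize_of_mem hq, ← key, add_lt_add_iff_right, add_left_inj]

lemma standardize_destandardize (hw : IsStdWord n w) (hf : Monotone f)
    (hfs : SgnCompatible n (wordSgn n w) f) :
    standardize n (destandardize n w f) = w :=
  standardize_eq_of_lex_lt_iff hw fun _ hp _ hq => destandardize_lex_lt_iff hw hf hfs hp hq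

/-- The letters of `u` in increasing order, shifted down by one. -/
noncomputable def sortedVals (n : ℕ) (u : ℕ → ℕ) : Fin n → ℕ :=
  fun m => u (posOf n (standardize n u) (m + 1)) - 1

lemma monotone_sortedVals : Monotone (sortedVals n u) := by
  intro m m' hmm
  have hs := isStdWord_standardize n u
  have hm : (m : ℕ) + 1 ∈ Set.Icc 1 n := ⟨by omega, m.isLt⟩
  have hm' : (m' : ℕ) + 1 ∈ Set.Icc 1 n := ⟨by omega, m'.isLt⟩
  have hle := (standardize_lt_standardize_iff (hs.posOf_mem hm') (hs.posOf_mem hm)).not.1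
    (by rw [hs.apply_posOf hm, hs.apply_posOf hm']; exact not_lt.2 (by simpa using hmm))
  rw [not_lt, Prod.Lex.toLex_le_toLex] at hle
  simp only [sortedVals]
  omega

lemma sgnCompatible_sortedVals (hu : IsPosWord n u) :
    SgnCompatible n (wordSgn n (standardize n u)) (sortedVals n u) := by
  intro j hj hj1 heq
  have hs := isStdWord_standardize n u
  have ha : j ∈ Set.Icc 1 n := ⟨hj1, hj.le⟩
  have hb : j + 1 ∈ Set.Icc 1 n := ⟨by omega, hj⟩
  have hlex := (standardize_lt_standardize_iff (hs.posOf_mem ha) (hs.posOf_mem hb)).1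
    (by rw [hs.apply_posOf ha, hs.apply_posOf hb]; omega)
  simp only [sortedVals, Nat.sub_add_cancel hj1] at heq
  have h₁ := hu.1 _ (hs.posOf_mem ha)
  have h₂ := hu.1 _ (hs.posOf_mem hb)
  rw [Prod.Lex.toLex_lt_toLex] at hlex
  have hpq : posOf n (standardize n u) j < posOf n (standardize n u) (j + 1) := by omega
  rw [wordSgn, if_pos ⟨_, _, hs.posOf_mem ha, hs.posOf_mem hb, hpq, hs.apply_posOf ha,
    hs.apply_posOf hb⟩]

lemma destandardize_standardize_sortedVals (hu : IsPosWord n u) :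
    destandardize n (standardize n u) (sortedVals n u) = u := by
  funext p
  by_cases hp : p ∈ Set.Icc 1 n
  · have hs := isStdWord_standardize n u
    have hsp := hs.1.mapsTo hp
    simp only [Set.mem_Icc] at hsp
    rw [destandardize_of_mem hp, finExtend_of_lt (by omega : standardize n u p - 1 < n)]
    simp only [sortedVals, Nat.sub_add_cancel hsp.1, hs.posOf_apply hp]
    have := hu.1 p hp
    omega
  · rw [hu.2 p hp]
    exact if_neg hp

end Destandardization

def SameInversions (n : ℕ) (u v : ℕ → ℕ) : Prop :=
  ∀ p ∈ Set.Icc 1 n, ∀ q ∈ Set.Icc 1 n, p < q → (u q < u p ↔ v q < v p)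

namespace SameInversions

variable {k n : ℕ} {c : ℕ → ℤ} {u v : ℕ → ℕ}

lemma symm (h : SameInversions n u v) : SameInversions n v u :=
  fun p hp q hq hpq => (h p hp q hq hpq).symm

lemma of_lex_lt_iff
    (h : ∀ p ∈ Set.Icc 1 n, ∀ q ∈ Set.Icc 1 n, toLex (u p, p) < toLex (u q, q) ↔ v p < v q) :
    SameInversions n u v := by
  intro p hp q hq hpq
  rw [← h q hq p hp, Prod.Lex.toLex_lt_toLex]
  constructor
  · exact Or.inl
  · rintro (h | ⟨-, h⟩)
    exacts [h, absurd h hpq.not_gt]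

lemma lt_iff (h : SameInversions n u v) (hc : MonotoneOn c (Set.Icc 1 n)) {p q : ℕ}
    (hp : p ∈ Set.Icc 1 n) (hq : q ∈ Set.Icc 1 n) (hcpq : c p < c q) : u q < u p ↔ v q < v p :=
  h p hp q hq (hc.reflect_lt hp hq hcpq)

lemma desK_eq (hk : 0 < k) (hc : MonotoneOn c (Set.Icc 1 n)) (h : SameInversions n u v) :
    DesK k n u c = DesK k n v c := by
  ext ⟨p, q⟩
  refine and_congr_right fun hp => and_congr_right fun hq => and_congr_left fun hpq => ?_
  exact h.lt_iff hc hp hq (by omega)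

lemma invK_eq (hc : MonotoneOn c (Set.Icc 1 n)) (h : SameInversions n u v) :
    invK k n u c = invK k n v c := by
  refine congrArg Set.ncard (Set.ext fun ⟨p, q⟩ => ?_)
  refine and_congr_right fun hp => and_congr_right fun hq => and_congr_left fun hpq => ?_
  exact h.lt_iff hc hp hq (sub_pos.1 hpq.1)

lemma isRibbonWord (hk : 0 < k) (hc : MonotoneOn c (Set.Icc 1 n)) (h : SameInversions n u v)
    (hu : IsRibbonWord k n u c) : IsRibbonWord k n v c := by
  intro p hp1 hpn hcp
  have hp : p ∈ Set.Icc 1 n := ⟨hp1, by omega⟩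
  have hp' : p + 1 ∈ Set.Icc 1 n := ⟨by omega, hpn⟩
  obtain ⟨⟨a, ha, hca, h₁, h₂⟩, ⟨b, hb, hcb, h₃, h₄⟩⟩ := hu p hp1 hpn hcp
  refine ⟨⟨a, ha, hca, (h.lt_iff hc ha hp (by omega)).1 h₁, ?_⟩,
    ⟨b, hb, hcb, ?_, (h.lt_iff hc hp' hb (by omega)).1 h₄⟩⟩
  · exact not_lt.1 ((h.lt_iff hc ha hp' (by omega)).not.1 (not_lt.2 h₂))
  · exact not_lt.1 ((h.lt_iff hc hp hb (by omega)).not.1 (not_lt.2 h₃))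

end SameInversions

lemma sameInversions_standardize {n : ℕ} {u : ℕ → ℕ} : SameInversions n u (standardize n u) :=
  .of_lex_lt_iff fun _ hp _ hq => (standardize_lt_standardize_iff hp hq).symm

lemma sameInversions_destandardize {n : ℕ} {w : ℕ → ℕ} {f : Fin n → ℕ} (hw : IsStdWord n w)
    (hf : Monotone f) (hfs : SgnCompatible n (wordSgn n w) f) :
    SameInversions n (destandardize n w f) w :=
  .of_lex_lt_iff fun _ hp _ hq => destandardize_lex_lt_iff hw hf hfs hp hq

def compatSeqs (n : ℕ) (s : ℕ → ℤ) (d : ℕ →₀ ℕ) : Set (Fin n → ℕ) :=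
  {f | Monotone f ∧ SgnCompatible n s f ∧ ∑ m, Finsupp.single (f m) 1 = d}

lemma Qfun_apply (R : Type) [CommRing R] (n : ℕ) (s : ℕ → ℤ) (d : ℕ →₀ ℕ) :
    Qfun R n s d = ((compatSeqs n s d).ncard : R) := rfl

instance (n : ℕ) (s : ℕ → ℤ) (d : ℕ →₀ ℕ) : Finite (compatSeqs n s d) := by
  refine Set.Finite.to_subtype <|
    (Set.Finite.pi (t := fun _ => (d.support : Set ℕ)) fun _ => d.support.finite_toSet).subset ?_
  rintro f ⟨-, -, hd⟩ m -
  simp only [Finset.mem_coe, Finsupp.mem_support_iff, ← hd, Finsupp.finsetSum_apply, ne_eq,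
    Finset.sum_eq_zero_iff, not_forall]
  exact ⟨m, Finset.mem_univ m, by simp⟩

lemma finsum_sigma_fst {α : Type*} {β : α → Type*} [Finite α] [∀ a, Finite (β a)]
    {M : Type*} [AddCommMonoid M] (g : α → M) :
    ∑ᶠ x : Σ a, β a, g x.1 = ∑ᶠ a, Nat.card (β a) • g a := by
  have := Fintype.ofFinite α
  have := fun a => Fintype.ofFinite (β a)
  rw [finsum_eq_sum_of_fintype, finsum_eq_sum_of_fintype, Fintype.sum_sigma]
  simp [Nat.card_eq_fintype_card]

section Gessel

variable {k n : ℕ} {c : ℕ → ℤ} {D : Set (ℕ × ℕ)} {d : ℕ →₀ ℕ}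

noncomputable def destandardizeSigma (hk : 0 < k) (hc : MonotoneOn c (Set.Icc 1 n))
    (x : Σ w : lltV k n c D, compatSeqs n (wordSgn n w.1) d) :
    {u : ℕ → ℕ // IsPosWord n u ∧ IsRibbonWord k n u c ∧ DesK k n u c = D ∧ wordWeight n u = d} :=
  have h := sameInversions_destandardize x.1.2.1 x.2.2.1 x.2.2.2.1
  ⟨destandardize n x.1.1 x.2.1, isPosWord_destandardize, h.symm.isRibbonWord hk hc x.1.2.2.1,
    (h.desK_eq hk hc).trans x.1.2.2.2, (wordWeight_destandardize x.1.2.1).trans x.2.2.2.2⟩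

lemma destandardizeSigma_bijective (hk : 0 < k) (hc : MonotoneOn c (Set.Icc 1 n)) :
    Function.Bijective (destandardizeSigma (D := D) (d := d) hk hc) := by
  constructor
  · rintro ⟨⟨w, hw⟩, ⟨f, hf⟩⟩ ⟨⟨w', hw'⟩, ⟨f', hf'⟩⟩ h
    have hu : destandardize n w f = destandardize n w' f' := congrArg Subtype.val h
    obtain rfl : w = w' := by
      rw [← standardize_destandardize hw.1 hf.1 hf.2.1, hu,
        standardize_destandardize hw'.1 hf'.1 hf'.2.1]
    obtain rfl : f = f' := funext fun m => by
      have := congrFun hu (posOf n w (m + 1))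
      rw [destandardize_posOf hw.1, destandardize_posOf hw.1] at this
      omega
    rfl
  · rintro ⟨u, hu, hrib, hD, hwt⟩
    have h := sameInversions_standardize (n := n) (u := u)
    refine ⟨⟨⟨standardize n u, isStdWord_standardize n u, h.isRibbonWord hk hc hrib,
      (h.desK_eq hk hc).symm.trans hD⟩, ⟨sortedVals n u, monotone_sortedVals,
      sgnCompatible_sortedVals hu, ?_⟩⟩, Subtype.ext (destandardize_standardize_sortedVals hu)⟩
    rw [← wordWeight_destandardize (isStdWord_standardize n u),
      destandardize_standardize_sortedVals hu, hwt]

theorem ribbonWordGF_eq_finsum_Qfun (hk : 0 < k) (hc : MonotoneOn c (Set.Icc 1 n))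
    (D : Set (ℕ × ℕ)) :
    ribbonWordGF k n c D = ∑ᶠ w : lltV k n c D,
      ((Polynomial.X : Polynomial ℤ) ^ invK k n w.1 c) • Qfun (Polynomial ℤ) n (wordSgn n w.1) := by
  funext d
  let X : Polynomial ℤ := Polynomial.X
  calc ribbonWordGF k n c D d
      = ∑ᶠ x : Σ w : lltV k n c D, compatSeqs n (wordSgn n w.1) d, X ^ invK k n x.1.1 c :=
        (finsum_eq_of_bijective _ (destandardizeSigma_bijective hk hc) fun x => congrArg (X ^ ·)
          ((sameInversions_destandardize x.1.2.1 x.2.2.1 x.2.2.2.1).invK_eq hc).symm).symm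
    _ = ∑ᶠ w : lltV k n c D, Nat.card (compatSeqs n (wordSgn n w.1) d) • X ^ invK k n w.1 c :=
        finsum_sigma_fst fun w : lltV k n c D => X ^ invK k n w.1 c
    _ = MvPowerSeries.coeff d
          (∑ᶠ w : lltV k n c D, (X ^ invK k n w.1 c) • Qfun (Polynomial ℤ) n (wordSgn n w.1)) := by
        rw [map_finsum _ (Set.toFinite _)]
        refine finsum_congr fun w => ?_
        rw [MvPowerSeries.coeff_smul, Nat.card_coe_set_eq, nsmul_eq_mul, mul_comm, ← Qfun_apply]
        rfl

end Gessel

theorem statement16_general (k n : ℕ) (hk : 0 < k) (S : Fin k → Finset (ℕ × ℕ))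
    (hS : ∀ i, IsSkewShape (S i))
    (e : ℕ → Fin k × ℕ × ℕ) (he : IsCellEnum k n S e)
    (c : ℕ → ℤ) (hc : ∀ p ∈ Set.Icc 1 n, c p = shiftedContent k (e p))
    (D : Set (ℕ × ℕ))
    (hD : ∀ T : Fin k → ℕ × ℕ → ℕ, SemistdTuple S T → DesK k n (readWord n e T) c = D) :
    LLTpoly k S = ribbonWordGF k n c D ∧
    LLTpoly k S = ∑ᶠ w : lltV k n c D,
      ((Polynomial.X : Polynomial ℤ) ^ invK k n w.1 c) •
        Qfun (Polynomial ℤ) n (wordSgn n w.1) := by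
  have hLLT := LLTpoly_eq_ribbonWordGF hS he hc hD
  exact ⟨hLLT, hLLT.trans (ribbonWordGF_eq_finsum_Qfun hk (he.monotoneOn hc) D)⟩

/-- Let `μ` be a `k`-tuple of skew shapes with `n` cells in
total, with corresponding content vector `c` and `k`-descent set `D`.  Then
`G̃^(k)_μ(x;q) = Σ_((w,c) ∈ WRib_k(c,D)) q^(inv_k(w,c)) x^w
             = Σ q^(inv_k(w,c)) Q_(σ(w))(x)`,
the last sum over the standard `k`-ribbon words in `WRib_k(c,D)`. -/
theorem statement16 (k n : ℕ) (hk : 0 < k) (S : Fin k → Finset (ℕ × ℕ))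
    (hS : ∀ i, IsSkewShape (S i)) (hn : (∑ i, (S i).card) = n)
    (e : ℕ → Fin k × ℕ × ℕ) (he : IsCellEnum k n S e)
    (c : ℕ → ℤ) (hc : ∀ p ∈ Set.Icc 1 n, c p = shiftedContent k (e p))
    (D : Set (ℕ × ℕ))
    (hD : ∀ T : Fin k → ℕ × ℕ → ℕ, SemistdTuple S T → DesK k n (readWord n e T) c = D) :
    LLTpoly k S = ribbonWordGF k n c D ∧
    LLTpoly k S = ∑ᶠ w : lltV k n c D,
      ((Polynomial.X : Polynomial ℤ) ^ invK k n w.1 c) •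
        Qfun (Polynomial ℤ) n (wordSgn n w.1) :=
  statement16_general k n hk S hS e he c hc D hD
end
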